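/- arXiv:2305.04805 — 12 statements merged into one kernel-verified Lean document; each statement's English description precedes it below -/
import Mathlib

section
/- For each t ∈ [0,1), the operator C_t is a bicontinuous linear isomorphism of ω onto itself, whose inverse is given by (C_t)^{-1} y = ((n+1) y_n − n t y_{n−1})_{n∈ℕ₀}, with the convention y_{−1} := 0. -/
/-! Multiplied by `n + 1`, `C_t x` is the weighted partial sum `S_n = ∑ i ≤ n, t^(n-i) x_i`,
which obeys `S_{n+1} = t S_n + x_{n+1}`. Solving it for `x_{n+1}` gives the inverse formula, and
conversely induction along the recursion shows that `C_t` undoes that formula. Both maps are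
coordinatewise finite linear combinations of coordinate projections, hence continuous for the
product topology. -/

/-- The generalized Cesàro operator `C_t` acting on complex sequences:
`(C_t x)_n = (1/(n+1)) ∑_{i=0}^n t^{n-i} x_i`. -/
noncomputable def genCesaro (t : ℝ) (x : ℕ → ℂ) : ℕ → ℂ :=
  fun n => (1 / ((n : ℂ) + 1)) * ∑ i ∈ Finset.range (n + 1), (t : ℂ) ^ (n - i) * x i

open Finset

theorem genCesaro_zero (t : ℝ) (x : ℕ → ℂ) : genCesaro t x 0 = x 0 := by
  simp [genCesaro]

theorem add_one_mul_genCesaro (t : ℝ) (x : ℕ → ℂ) (n : ℕ) :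
    ((n : ℂ) + 1) * genCesaro t x n = ∑ i ∈ range (n + 1), (t : ℂ) ^ (n - i) * x i := by
  rw [genCesaro, ← mul_assoc, mul_one_div_cancel n.cast_add_one_ne_zero, one_mul]

theorem genCesaro_succ (t : ℝ) (x : ℕ → ℂ) (n : ℕ) :
    ((n : ℂ) + 2) * genCesaro t x (n + 1) = t * ((n : ℂ) + 1) * genCesaro t x n + x (n + 1) := by
  have h := add_one_mul_genCesaro t x (n + 1)
  rw [Nat.cast_succ, add_assoc, one_add_one_eq_two] at h
  rw [h, mul_assoc, add_one_mul_genCesaro, sum_range_succ _ (n + 1), mul_sum, Nat.sub_self,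
    pow_zero, one_mul]
  congr 1
  refine sum_congr rfl fun i hi => ?_
  rw [Nat.sub_add_comm (mem_range_succ_iff.mp hi), pow_succ]
  ring

noncomputable def genCesaroCLM (t : ℝ) : (ℕ → ℂ) →L[ℂ] (ℕ → ℂ) :=
  ContinuousLinearMap.pi fun n =>
    (1 / ((n : ℂ) + 1)) • ∑ i ∈ range (n + 1), ((t : ℂ) ^ (n - i)) • ContinuousLinearMap.proj i

noncomputable def genCesaroInvCLM (t : ℝ) : (ℕ → ℂ) →L[ℂ] (ℕ → ℂ) :=
  ContinuousLinearMap.pi fun n =>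
    ((n : ℂ) + 1) • ContinuousLinearMap.proj n - ((n : ℂ) * t) • ContinuousLinearMap.proj (n - 1)

@[simp]
theorem genCesaroCLM_apply (t : ℝ) (x : ℕ → ℂ) : genCesaroCLM t x = genCesaro t x := by
  ext n
  simp [genCesaroCLM, genCesaro]

@[simp]
theorem genCesaroInvCLM_apply (t : ℝ) (y : ℕ → ℂ) (n : ℕ) :
    genCesaroInvCLM t y n = ((n : ℂ) + 1) * y n - (n : ℂ) * (t : ℂ) * y (n - 1) := by
  simp [genCesaroInvCLM]

theorem genCesaroInvCLM_comp_genCesaroCLM (t : ℝ) :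
    (genCesaroInvCLM t).comp (genCesaroCLM t) = ContinuousLinearMap.id ℂ _ := by
  ext x n
  cases n with
  | zero => simp [genCesaro_zero]
  | succ n =>
    simp only [ContinuousLinearMap.comp_apply, genCesaroInvCLM_apply, genCesaroCLM_apply,
      Nat.add_sub_cancel, Nat.cast_succ, ContinuousLinearMap.id_apply]
    linear_combination genCesaro_succ t x n

theorem genCesaroCLM_comp_genCesaroInvCLM (t : ℝ) :
    (genCesaroCLM t).comp (genCesaroInvCLM t) = ContinuousLinearMap.id ℂ _ := by
  ext y n
  simp only [ContinuousLinearMap.comp_apply, genCesaroCLM_apply, ContinuousLinearMap.id_apply]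
  induction n with
  | zero => simp [genCesaro_zero]
  | succ n ih =>
    have hn : (n : ℂ) + 2 ≠ 0 := by norm_cast
    refine mul_left_cancel₀ hn ?_
    have hrec := genCesaro_succ t (genCesaroInvCLM t y) n
    rw [ih, genCesaroInvCLM_apply, Nat.add_sub_cancel, Nat.cast_succ] at hrec
    linear_combination hrec

theorem genCesaro_continuousLinearEquiv_general (t : ℝ) :
    ∃ e : (ℕ → ℂ) ≃L[ℂ] (ℕ → ℂ),
      (∀ x, e x = genCesaro t x) ∧
      (∀ (y : ℕ → ℂ) (n : ℕ),
        e.symm y n = ((n : ℂ) + 1) * y n - (n : ℂ) * (t : ℂ) * y (n - 1)) :=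
  ⟨.equivOfInverse' (genCesaroCLM t) (genCesaroInvCLM t)
      (genCesaroCLM_comp_genCesaroInvCLM t) (genCesaroInvCLM_comp_genCesaroCLM t),
    genCesaroCLM_apply t, genCesaroInvCLM_apply t⟩

/-- For each `t ∈ [0,1)`, the operator `C_t` is a bicontinuous linear isomorphism of
`ω = ℂ^ℕ` (with the product topology) onto itself, whose inverse is given by
`(C_t)⁻¹ y = ((n+1) yₙ - n t y_{n-1})ₙ` (with `y₋₁ := 0`; note that for `n = 0` the
second term vanishes since its coefficient is `n = 0`). -/
theorem genCesaro_continuousLinearEquiv (t : ℝ) (ht : t ∈ Set.Ico (0 : ℝ) 1) :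
    ∃ e : (ℕ → ℂ) ≃L[ℂ] (ℕ → ℂ),
      (∀ x, e x = genCesaro t x) ∧
      (∀ (y : ℕ → ℂ) (n : ℕ),
        e.symm y n = ((n : ℂ) + 1) * y n - (n : ℂ) * (t : ℂ) * y (n - 1)) :=
  genCesaro_continuousLinearEquiv_general t
end

section
/- For each t ∈ [0,1), the continuous linear operator C_t on ω is not a compact operator, i.e., there is no neighbourhood U of 0 in ω whose image C_t(U) is relatively compact in ω. -/
open Function Set

theorem exists_forall_update_mem_of_mem_nhds {ι : Type*} [Infinite ι] [DecidableEq ι]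
    {E : ι → Type*} [∀ i, TopologicalSpace (E i)] {x : ∀ i, E i} {U : Set (∀ i, E i)}
    (hU : U ∈ nhds x) : ∃ N, ∀ c, update x N c ∈ U := by
  rw [nhds_pi, Filter.mem_pi] at hU
  obtain ⟨I, hI, V, hV, hVU⟩ := hU
  obtain ⟨N, hN⟩ := hI.infinite_compl.nonempty
  refine ⟨N, fun c => hVU fun i hi => ?_⟩
  rw [update_of_ne (ne_of_mem_of_not_mem hi hN)]
  exact mem_of_mem_nhds (hV i)

theorem Pi.isBounded_eval_image_of_isCompact_closure {ι F : Type*} [PseudoMetricSpace F]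
    {S : Set (ι → F)} (hS : IsCompact (closure S)) (N : ι) :
    Bornology.IsBounded (eval N '' S) :=
  (hS.image (continuous_apply N)).isBounded.subset (image_mono subset_closure)

theorem genCesaro_single_self (t : ℝ) (N : ℕ) (c : ℂ) :
    genCesaro t (Pi.single N c) N = c / (N + 1) := by
  simp only [genCesaro, Pi.single_apply, mul_ite, mul_zero, Finset.sum_ite_eq',
    Finset.mem_range, Nat.lt_succ_self, if_true, Nat.sub_self, pow_zero, one_mul]
  ring

theorem genCesaro_not_compact_general (t : ℝ) :
    ¬ ∃ U ∈ nhds (0 : ℕ → ℂ), IsCompact (closure (genCesaro t '' U)) := by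
  rintro ⟨U, hU, hK⟩
  obtain ⟨N, hN⟩ := exists_forall_update_mem_of_mem_nhds hU
  refine NormedSpace.unbounded_univ ℂ ℂ
    ((Pi.isBounded_eval_image_of_isCompact_closure hK N).subset fun c _ => ?_)
  refine ⟨genCesaro t (Pi.single N ((N + 1) * c)), ⟨_, hN _, rfl⟩, ?_⟩
  rw [eval, genCesaro_single_self, mul_div_cancel_left₀ _ (Nat.cast_add_one_ne_zero N)]

/-- For each `t ∈ [0,1)`, the operator `C_t` on `ω = ℂ^ℕ` (product topology) is not
compact: there is no neighbourhood `U` of `0` whose image `C_t(U)` is relatively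
compact in `ω`. -/
theorem genCesaro_not_compact (t : ℝ) (ht : t ∈ Set.Ico (0 : ℝ) 1) :
    ¬ ∃ U ∈ nhds (0 : ℕ → ℂ), IsCompact (closure (genCesaro t '' U)) :=
  genCesaro_not_compact_general t
end

section
/- Let t ∈ [0,1) and m ∈ ℕ₀. Then C_t x^{[m]} = (1/(m+1)) x^{[m]}, and moreover every complex sequence x satisfying C_t x = (1/(m+1)) x is a scalar multiple of x^{[m]}; more precisely, such an x equals x_m · x^{[m]} (its m-th coordinate determines it uniquely). -/
/-- The eigenvector `x^{[m]}`: `x^{[m]}_n = 0` for `n < m` and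
`x^{[m]}_n = C(n,m) t^{n-m}` for `n ≥ m`. -/
noncomputable def eigvec (t : ℝ) (m : ℕ) : ℕ → ℂ :=
  fun n => if n < m then 0 else (Nat.choose n m : ℂ) * (t : ℂ) ^ (n - m)

/-!
Writing `S_n = ∑_{i ≤ n} t^{n-i} x_i`, the eigenvalue equation `C_t x = x / (m+1)` reads
`(m+1) S_n = (n+1) x_n`, and `S_{n+1} = t S_n + x_{n+1}` turns it into the first-order recurrence
`m x_0 = 0`, `(n+1-m) x_{n+1} = t (n+1) x_n`. The coefficient `n+1-m` vanishes only at `n+1 = m`,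
so a solution is determined by `x_m`, and `x^{[m]}` is the solution with `x^{[m]}_m = 1`.
-/

open Finset

noncomputable def genCesaroSum (t : ℝ) (x : ℕ → ℂ) (n : ℕ) : ℂ :=
  ∑ i ∈ range (n + 1), (t : ℂ) ^ (n - i) * x i

section Recurrence

variable {t : ℝ} {m : ℕ} {x : ℕ → ℂ}

theorem genCesaroSum_zero : genCesaroSum t x 0 = x 0 := by
  simp [genCesaroSum]

theorem genCesaroSum_succ (n : ℕ) :
    genCesaroSum t x (n + 1) = t * genCesaroSum t x n + x (n + 1) := by
  rw [genCesaroSum, sum_range_succ, Nat.sub_self, pow_zero, one_mul, genCesaroSum, mul_sum]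
  congr 1
  refine sum_congr rfl fun i hi => ?_
  rw [Nat.sub_add_comm (Nat.le_of_lt_succ (mem_range.1 hi)), pow_succ]
  ring

theorem genCesaro_eq_inv_smul_iff {c : ℂ} (hc : c ≠ 0) :
    genCesaro t x = c⁻¹ • x ↔ ∀ n, c * genCesaroSum t x n = (n + 1) * x n := by
  simp only [funext_iff, genCesaro, Pi.smul_apply, smul_eq_mul]
  refine forall_congr' fun n => ?_
  have hn : (n : ℂ) + 1 ≠ 0 := Nat.cast_add_one_ne_zero n
  rw [genCesaroSum]
  constructor <;> intro h
  · field_simp at h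
    linear_combination h
  · field_simp
    linear_combination h

theorem mul_genCesaroSum_eq_iff :
    (∀ n, ((m : ℂ) + 1) * genCesaroSum t x n = (n + 1) * x n) ↔
      (m : ℂ) * x 0 = 0 ∧ ∀ n : ℕ, ((n : ℂ) + 1 - m) * x (n + 1) = t * (n + 1) * x n := by
  constructor
  · intro h
    refine ⟨?_, fun n => ?_⟩
    · have h0 := h 0
      rw [genCesaroSum_zero] at h0
      linear_combination h0
    · have h1 := h (n + 1)
      rw [genCesaroSum_succ] at h1
      push_cast at h1
      linear_combination t * h n - h1
  · rintro ⟨h0, hrec⟩ n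
    induction n with
    | zero => rw [genCesaroSum_zero]; linear_combination h0
    | succ n ih =>
      rw [genCesaroSum_succ]
      push_cast
      linear_combination t * ih - hrec n

theorem genCesaro_eq_smul_iff :
    genCesaro t x = (1 / ((m : ℂ) + 1)) • x ↔
      (m : ℂ) * x 0 = 0 ∧ ∀ n : ℕ, ((n : ℂ) + 1 - m) * x (n + 1) = t * (n + 1) * x n := by
  rw [one_div, genCesaro_eq_inv_smul_iff (Nat.cast_add_one_ne_zero m), mul_genCesaroSum_eq_iff]

theorem eq_zero_of_recurrence (h0 : (m : ℂ) * x 0 = 0)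
    (hrec : ∀ n : ℕ, ((n : ℂ) + 1 - m) * x (n + 1) = t * (n + 1) * x n) (hm : x m = 0) :
    x = 0 := by
  suffices ∀ n, x n = 0 from funext this
  intro n
  induction n with
  | zero =>
    rcases eq_or_ne m 0 with rfl | hm0
    · exact hm
    · exact (mul_eq_zero.1 h0).resolve_left (Nat.cast_ne_zero.2 hm0)
  | succ n ih =>
    rcases eq_or_ne (n + 1) m with rfl | hnm
    · exact hm
    · have hcoef : (n : ℂ) + 1 - m ≠ 0 := by
        rw [sub_ne_zero]
        exact_mod_cast hnm
      have := hrec n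
      rw [ih, mul_zero] at this
      exact (mul_eq_zero.1 this).resolve_left hcoef

end Recurrence

section Eigvec

variable (t : ℝ) (m : ℕ)

theorem eigvec_apply (n : ℕ) : eigvec t m n = n.choose m * (t : ℂ) ^ (n - m) := by
  unfold eigvec
  split_ifs with h
  · simp [Nat.choose_eq_zero_of_lt h]
  · rfl

theorem eigvec_self : eigvec t m m = 1 := by
  simp [eigvec_apply]

theorem mul_eigvec_zero : (m : ℂ) * eigvec t m 0 = 0 := by
  rcases Nat.eq_zero_or_pos m with rfl | hm
  · simp
  · simp [eigvec, hm]

theorem eigvec_recurrence (n : ℕ) :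
    ((n : ℂ) + 1 - m) * eigvec t m (n + 1) = t * (n + 1) * eigvec t m n := by
  simp only [eigvec_apply]
  rcases lt_or_ge n m with hnm | hmn
  · rw [Nat.choose_eq_zero_of_lt hnm]
    rcases (Nat.succ_le_of_lt hnm).lt_or_eq with hlt | rfl
    · rw [Nat.choose_eq_zero_of_lt hlt]
      simp
    · push_cast
      ring
  · have hchoose := congrArg (Nat.cast (R := ℂ)) (Nat.choose_mul_succ_eq n m)
    push_cast [Nat.cast_sub (Nat.le_succ_of_le hmn)] at hchoose
    rw [Nat.sub_add_comm hmn, pow_succ]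
    linear_combination (-(t : ℂ) ^ (n - m) * t) * hchoose

end Eigvec

theorem genCesaro_eigvec_unique_general (t : ℝ) (m : ℕ) :
    genCesaro t (eigvec t m) = (1 / ((m : ℂ) + 1)) • eigvec t m ∧
    ∀ x : ℕ → ℂ, genCesaro t x = (1 / ((m : ℂ) + 1)) • x → x = x m • eigvec t m := by
  refine ⟨genCesaro_eq_smul_iff.2 ⟨mul_eigvec_zero t m, eigvec_recurrence t m⟩, fun x hx => ?_⟩
  obtain ⟨h0, hrec⟩ := genCesaro_eq_smul_iff.1 hx
  have hdiff : x - x m • eigvec t m = 0 := by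
    refine eq_zero_of_recurrence (t := t) (m := m) ?_ (fun n => ?_) ?_
    · simp only [Pi.sub_apply, Pi.smul_apply, smul_eq_mul]
      linear_combination h0 - x m * mul_eigvec_zero t m
    · simp only [Pi.sub_apply, Pi.smul_apply, smul_eq_mul]
      linear_combination hrec n - x m * eigvec_recurrence t m n
    · simp [eigvec_self]
  exact sub_eq_zero.1 hdiff

/-- Let `t ∈ [0,1)` and `m ∈ ℕ`. Then `C_t x^{[m]} = (1/(m+1)) x^{[m]}`, and every
complex sequence `x` with `C_t x = (1/(m+1)) x` equals `x_m • x^{[m]}`. -/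
theorem genCesaro_eigvec_unique (t : ℝ) (ht : t ∈ Set.Ico (0 : ℝ) 1) (m : ℕ) :
    genCesaro t (eigvec t m) = (1 / ((m : ℂ) + 1)) • eigvec t m ∧
    ∀ x : ℕ → ℂ, genCesaro t x = (1 / ((m : ℂ) + 1)) • x → x = x m • eigvec t m :=
  genCesaro_eigvec_unique_general t m
end

section
/- Let t ∈ [0,1) and m ∈ ℕ₀. Then the sequence x^{[m]} belongs to d₁, that is, x^{[m]} is bounded and its least decreasing majorant is summable: the series ∑_{n=0}^∞ sup_{k≥n} |x^{[m]}_k| = ∑_{n=0}^∞ sup_{k≥max(n,m)} C(k,m) t^{k−m} converges. -/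
/-!
`C(k,m) |t|^{k-m}` is dominated by a geometric sequence `C r^k` for any `|t| < r < 1`, because
`C(j+m,m) (|t|/r)^j` is the general term of a convergent series and hence bounded. A sequence
dominated by a decreasing summable sequence has its least decreasing majorant dominated by the
same sequence.
-/

lemma summable_iSup_tail_norm_of_norm_le_antitone {E : Type*} [SeminormedAddCommGroup E]
    {f : ℕ → E} {g : ℕ → ℝ} (hg : Antitone g) (hg_sum : Summable g) (hfg : ∀ k, ‖f k‖ ≤ g k) :
    Summable (fun n : ℕ => ⨆ k : {k : ℕ // n ≤ k}, ‖f k‖) := by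
  refine hg_sum.of_nonneg_of_le (fun n => Real.iSup_nonneg fun _ => norm_nonneg _) fun n => ?_
  have : Nonempty {k : ℕ // n ≤ k} := ⟨⟨n, le_rfl⟩⟩
  exact ciSup_le fun ⟨k, hk⟩ => (hfg k).trans (hg hk)

lemma exists_choose_mul_pow_sub_le_mul_pow (m : ℕ) {t r : ℝ} (ht : 0 ≤ t) (htr : t < r) :
    ∃ C, 0 ≤ C ∧ ∀ k, (k.choose m : ℝ) * t ^ (k - m) ≤ C * r ^ k := by
  have hr : 0 < r := ht.trans_lt htr
  set s := t / r
  have hs : ‖s‖ < 1 := by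
    rw [Real.norm_of_nonneg (by positivity)]
    exact (div_lt_one hr).mpr htr
  obtain ⟨B, hB⟩ := (summable_choose_mul_geometric_of_norm_lt_one m hs).tendsto_atTop_zero
    |>.bddAbove_range
  have hB0 : 0 ≤ B := zero_le_one.trans (hB ⟨0, by simp⟩)
  refine ⟨B / r ^ m, by positivity, fun k => ?_⟩
  rcases lt_or_ge k m with hk | hk
  · rw [Nat.choose_eq_zero_of_lt hk, Nat.cast_zero, zero_mul]
    positivity
  obtain ⟨j, rfl⟩ := Nat.exists_eq_add_of_le' hk
  calc ((j + m).choose m : ℝ) * t ^ (j + m - m) = ((j + m).choose m * s ^ j) * r ^ j := by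
        rw [Nat.add_sub_cancel, div_pow, mul_assoc, div_mul_cancel₀ _ (pow_ne_zero _ hr.ne')]
    _ ≤ B * r ^ j := mul_le_mul_of_nonneg_right (hB ⟨j, rfl⟩) (by positivity)
    _ = B / r ^ m * r ^ (j + m) := by
        rw [pow_add, div_mul_eq_mul_div, mul_div_assoc, mul_div_cancel_right₀ _ (pow_ne_zero _ hr.ne')]

lemma norm_eigvec (t : ℝ) (m k : ℕ) : ‖eigvec t m k‖ = (k.choose m : ℝ) * |t| ^ (k - m) := by
  unfold eigvec
  split_ifs with hk
  · simp [Nat.choose_eq_zero_of_lt hk]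
  · simp

/-- Let `t ∈ [0,1)` and `m ∈ ℕ`. Then `x^{[m]}` belongs to `d₁`: it is a bounded
sequence and its least decreasing majorant `(sup_{k ≥ n} |x^{[m]}_k|)ₙ` is summable. -/
theorem eigvec_mem_d1 (t : ℝ) (ht : t ∈ Set.Ico (0 : ℝ) 1) (m : ℕ) :
    (∃ M : ℝ, ∀ k, ‖eigvec t m k‖ ≤ M) ∧
    Summable (fun n : ℕ => ⨆ k : {k : ℕ // n ≤ k}, ‖eigvec t m k‖) := by
  have habs : |t| < 1 := abs_lt.mpr ⟨by linarith [ht.1], ht.2⟩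
  obtain ⟨r, htr, hr1⟩ := exists_between habs
  have hr0 : 0 ≤ r := (abs_nonneg t).trans htr.le
  obtain ⟨C, hC, hbound⟩ := exists_choose_mul_pow_sub_le_mul_pow m (abs_nonneg t) htr
  have hanti : Antitone fun k => C * r ^ k :=
    fun _ _ hkl => mul_le_mul_of_nonneg_left (pow_le_pow_of_le_one hr0 hr1.le hkl) hC
  have hle : ∀ k, ‖eigvec t m k‖ ≤ C * r ^ k := fun k => (norm_eigvec t m k).trans_le (hbound k)
  exact ⟨⟨C, fun k => (hle k).trans (by simpa using hanti (Nat.zero_le k))⟩,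
    summable_iSup_tail_norm_of_norm_le_antitone hanti
      ((summable_geometric_of_lt_one hr0 hr1).mul_left C) hle⟩
end

section
/- Let t ∈ [0,1) and let ν ∈ ℂ with ν ∉ Λ. Then the operator C_t − ν I is a bijection of ω onto itself (hence, by the open mapping theorem, a bicontinuous isomorphism of ω onto itself). In particular, the spectrum of C_t on ω is contained in Λ. -/
/-!
`C_t - ν I` is given by a lower-triangular infinite matrix whose diagonal entries are
`1/(n+1) - ν`, and these are all nonzero exactly when `ν ∉ Λ`. A lower-triangular operator on
`ω` with nonzero diagonal is inverted by forward substitution: the `n`-th coordinate of the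
preimage is a continuous function of the first `n + 1` coordinates of the image.
-/

open Finset

namespace LowerTriangular

variable {K : Type*} [Field K] (a : ℕ → ℕ → K)

def forwardSubst (y : ℕ → K) : ℕ → K
  | n => (y n - ∑ i ∈ (range n).attach, a n i * forwardSubst y i) / a n n
  decreasing_by exact mem_range.mp i.2

theorem forwardSubst_eq (y : ℕ → K) (n : ℕ) :
    forwardSubst a y n = (y n - ∑ i ∈ range n, a n i * forwardSubst a y i) / a n n := by
  rw [forwardSubst, sum_attach (range n) fun i => a n i * forwardSubst a y i]

variable [TopologicalSpace K] [IsTopologicalRing K]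

theorem continuous_forwardSubst : Continuous (forwardSubst a) := by
  refine continuous_pi fun n => ?_
  induction n using Nat.strong_induction_on with
  | _ n ih =>
    simp_rw [forwardSubst_eq a _ n]
    exact ((continuous_apply n).sub (continuous_finsetSum _ fun i hi =>
      continuous_const.mul (ih i (mem_range.mp hi)))).div_const _

/-- Entries `a n i` with `i > n` are ignored. -/
def toCLM : (ℕ → K) →L[K] (ℕ → K) :=
  ContinuousLinearMap.pi fun n => ∑ i ∈ range (n + 1), a n i • ContinuousLinearMap.proj i

theorem toCLM_apply (x : ℕ → K) (n : ℕ) : toCLM a x n = ∑ i ∈ range (n + 1), a n i * x i := by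
  simp [toCLM]

theorem toCLM_apply_eq_add (x : ℕ → K) (n : ℕ) :
    toCLM a x n = ∑ i ∈ range n, a n i * x i + a n n * x n := by
  rw [toCLM_apply, sum_range_succ]

variable {a}

theorem toCLM_forwardSubst (ha : ∀ n, a n n ≠ 0) (y : ℕ → K) :
    toCLM a (forwardSubst a y) = y := by
  funext n
  rw [toCLM_apply_eq_add, forwardSubst_eq a y n, mul_div_cancel₀ _ (ha n), add_sub_cancel]

theorem forwardSubst_toCLM (ha : ∀ n, a n n ≠ 0) (x : ℕ → K) :
    forwardSubst a (toCLM a x) = x := by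
  funext n
  induction n using Nat.strong_induction_on with
  | _ n ih =>
    have hsum : ∑ i ∈ range n, a n i * forwardSubst a (toCLM a x) i = ∑ i ∈ range n, a n i * x i :=
      sum_congr rfl fun i hi => by rw [ih i (mem_range.mp hi)]
    rw [forwardSubst_eq, hsum, toCLM_apply_eq_add, add_sub_cancel_left,
      mul_div_cancel_left₀ _ (ha n)]

def toContinuousLinearEquiv (ha : ∀ n, a n n ≠ 0) : (ℕ → K) ≃L[K] (ℕ → K) where
  toLinearMap := toCLM a
  invFun := forwardSubst a
  left_inv := forwardSubst_toCLM ha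
  right_inv := toCLM_forwardSubst ha
  continuous_toFun := (toCLM a).continuous
  continuous_invFun := continuous_forwardSubst a

theorem toContinuousLinearEquiv_apply (ha : ∀ n, a n n ≠ 0) (x : ℕ → K) :
    toContinuousLinearEquiv ha x = toCLM a x :=
  rfl

end LowerTriangular

noncomputable def genCesaroSubSmulMatrix (t : ℝ) (ν : ℂ) (n i : ℕ) : ℂ :=
  1 / ((n : ℂ) + 1) * (t : ℂ) ^ (n - i) - if i = n then ν else 0

theorem genCesaro_sub_smul_eq_toCLM (t : ℝ) (ν : ℂ) (x : ℕ → ℂ) :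
    genCesaro t x - ν • x = LowerTriangular.toCLM (genCesaroSubSmulMatrix t ν) x := by
  funext n
  simp only [LowerTriangular.toCLM_apply, genCesaroSubSmulMatrix, sub_mul, ite_mul, zero_mul,
    sum_sub_distrib, sum_ite_eq', mem_range, Nat.lt_succ_self, if_true, mul_assoc, ← mul_sum,
    genCesaro, Pi.sub_apply, Pi.smul_apply, smul_eq_mul]

theorem genCesaro_sub_smul_bijective_general (t : ℝ)
    (ν : ℂ) (hν : ν ∉ {z : ℂ | ∃ n : ℕ, z = 1 / ((n : ℂ) + 1)}) :
    Function.Bijective (fun x : ℕ → ℂ => genCesaro t x - ν • x) ∧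
    ∃ e : (ℕ → ℂ) ≃L[ℂ] (ℕ → ℂ), ∀ x, e x = genCesaro t x - ν • x := by
  have hdiag : ∀ n, genCesaroSubSmulMatrix t ν n n ≠ 0 := fun n h =>
    hν ⟨n, by simpa [genCesaroSubSmulMatrix] using (sub_eq_zero.mp h).symm⟩
  set e := LowerTriangular.toContinuousLinearEquiv hdiag
  have he : ∀ x, e x = genCesaro t x - ν • x := fun x =>
    (LowerTriangular.toContinuousLinearEquiv_apply hdiag x).trans
      (genCesaro_sub_smul_eq_toCLM t ν x).symm
  exact ⟨funext he ▸ e.bijective, e, he⟩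

/-- Let `t ∈ [0,1)` and `ν ∈ ℂ` with `ν ∉ Λ = {1/(n+1) : n ∈ ℕ}`. Then `C_t - ν I`
is a bijection of `ω = ℂ^ℕ` onto itself, indeed a bicontinuous linear isomorphism
of `ω` (with the product topology) onto itself. In particular the spectrum of
`C_t` on `ω` is contained in `Λ`. -/
theorem genCesaro_sub_smul_bijective (t : ℝ) (ht : t ∈ Set.Ico (0 : ℝ) 1)
    (ν : ℂ) (hν : ν ∉ {z : ℂ | ∃ n : ℕ, z = 1 / ((n : ℂ) + 1)}) :
    Function.Bijective (fun x : ℕ → ℂ => genCesaro t x - ν • x) ∧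
    ∃ e : (ℕ → ℂ) ≃L[ℂ] (ℕ → ℂ), ∀ x, e x = genCesaro t x - ν • x :=
  genCesaro_sub_smul_bijective_general t ν hν
end

section
/- Let t ∈ [0,1) and n ∈ ℕ₀. Define the finitely supported sequence z^{[n]} by z^{[n]}_{n−i} = (−1)^i C(n,i) t^i for 0 ≤ i ≤ n and z^{[n]}_j = 0 for j > n. Then for every i ∈ ℕ₀ one has ∑_{k=i}^{∞} (t^{k−i}/(k+1)) z^{[n]}_k = (1/(n+1)) z^{[n]}_i; that is, z^{[n]} is an eigenvector of the transposed operator C'_t with eigenvalue 1/(n+1). -/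
/-- The finitely supported sequence `z^{[n]}`: `z^{[n]}_{n-i} = (-1)^i C(n,i) t^i`
for `0 ≤ i ≤ n` (that is, `z^{[n]}_j = (-1)^{n-j} C(n, n-j) t^{n-j}` for `j ≤ n`)
and `z^{[n]}_j = 0` for `j > n`. -/
noncomputable def zvec (t : ℝ) (n : ℕ) : ℕ → ℂ :=
  fun j => if j ≤ n then (-1 : ℂ) ^ (n - j) * (Nat.choose n (n - j) : ℂ) * (t : ℂ) ^ (n - j)
           else 0

lemma head_alt (n : ℕ) : ∀ m : ℕ,
    ∑ j ∈ Finset.range (m + 1), (-1 : ℤ) ^ j * (n + 1).choose j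
      = (-1) ^ m * n.choose m := by
  intro m
  induction m with
  | zero => simp
  | succ m ih =>
      rw [Finset.sum_range_succ, ih, Nat.choose_succ_succ (n := n) (k := m)]
      push_cast
      ring

lemma tailZ (n i : ℕ) (h : i ≤ n) :
    ∑ k ∈ Finset.Icc i n, (-1 : ℤ) ^ (n - k) * (n + 1).choose (k + 1)
      = (-1) ^ (n - i) * n.choose i := by
  rw [← Finset.Ico_add_one_right_eq_Icc, Finset.sum_Ico_eq_sum_range]
  have hN : n + 1 - i = (n - i) + 1 := by omega
  rw [hN]
  rw [← Finset.sum_range_reflect]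
  have hstep : ∀ j ∈ Finset.range (n - i + 1),
      (-1 : ℤ) ^ (n - (i + (n - i + 1 - 1 - j))) *
        (n + 1).choose (i + (n - i + 1 - 1 - j) + 1)
      = (-1 : ℤ) ^ j * (n + 1).choose j := by
    intro j hj
    rw [Finset.mem_range] at hj
    have h1 : n - (i + (n - i + 1 - 1 - j)) = j := by omega
    have h2 : i + (n - i + 1 - 1 - j) + 1 = (n + 1) - j := by omega
    rw [h1, h2, Nat.choose_symm (by omega)]
  rw [Finset.sum_congr rfl hstep, head_alt n (n - i), Nat.choose_symm h]

lemma tailC (n i : ℕ) (h : i ≤ n) :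
    ∑ k ∈ Finset.Icc i n, (-1 : ℂ) ^ (n - k) * ((n + 1).choose (k + 1) : ℂ)
      = (-1) ^ (n - i) * n.choose i := by
  exact_mod_cast tailZ n i h

/-- Let `t ∈ [0,1)` and `n ∈ ℕ`. Then for every `i ∈ ℕ`,
`∑_{k=i}^∞ (t^{k-i}/(k+1)) z^{[n]}_k = (1/(n+1)) z^{[n]}_i`; that is, `z^{[n]}` is
an eigenvector of the transposed Cesàro operator `C'_t` with eigenvalue `1/(n+1)`. -/
theorem zvec_eigenvector_dual (t : ℝ) (ht : t ∈ Set.Ico (0 : ℝ) 1) (n : ℕ) :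
    ∀ i : ℕ,
      (∑' k : ℕ, if i ≤ k then ((t : ℂ) ^ (k - i) / ((k : ℂ) + 1)) * zvec t n k else 0) =
      (1 / ((n : ℂ) + 1)) * zvec t n i := by
  intro i
  have hsum : (∑' k : ℕ, if i ≤ k then ((t : ℂ) ^ (k - i) / ((k : ℂ) + 1)) * zvec t n k else 0)
      = ∑ k ∈ Finset.range (n + 1),
          (if i ≤ k then ((t : ℂ) ^ (k - i) / ((k : ℂ) + 1)) * zvec t n k else 0) := by
    apply tsum_eq_sum
    intro k hk
    rw [Finset.mem_range, not_lt] at hk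
    have : zvec t n k = 0 := by
      unfold zvec
      rw [if_neg (by omega)]
    rw [this]
    simp
  rw [hsum]
  by_cases hin : i ≤ n
  · -- main case
    have hfilter : Finset.filter (fun k => i ≤ k) (Finset.range (n + 1)) = Finset.Icc i n := by
      ext k
      simp [Nat.lt_succ_iff, and_comm]
    rw [← Finset.sum_filter, hfilter]
    have hterm : ∀ k ∈ Finset.Icc i n,
        ((t : ℂ) ^ (k - i) / ((k : ℂ) + 1)) * zvec t n k
        = (t : ℂ) ^ (n - i) * ((-1 : ℂ) ^ (n - k) * ((n + 1).choose (k + 1) : ℂ))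
            * (1 / ((n : ℂ) + 1)) := by
      intro k hk
      rw [Finset.mem_Icc] at hk
      obtain ⟨hik, hkn⟩ := hk
      unfold zvec
      rw [if_pos hkn, Nat.choose_symm hkn]
      have hpow : (t : ℂ) ^ (k - i) * (t : ℂ) ^ (n - k) = (t : ℂ) ^ (n - i) := by
        rw [← pow_add]; congr 1; omega
      have hk1 : ((k : ℂ) + 1) ≠ 0 := Nat.cast_add_one_ne_zero k
      have hn1 : ((n : ℂ) + 1) ≠ 0 := Nat.cast_add_one_ne_zero n
      have hcc : ((n : ℂ) + 1) * (n.choose k : ℂ) = ((n + 1).choose (k + 1) : ℂ) * ((k : ℂ) + 1) := by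
        exact_mod_cast congrArg (Nat.cast : ℕ → ℂ) (Nat.add_one_mul_choose_eq n k)
      have hdiv : (n.choose k : ℂ) / ((k : ℂ) + 1) = ((n + 1).choose (k + 1) : ℂ) / ((n : ℂ) + 1) := by
        rw [div_eq_div_iff hk1 hn1]
        linear_combination hcc
      calc ((t : ℂ) ^ (k - i) / ((k : ℂ) + 1)) * ((-1 : ℂ) ^ (n - k) * (n.choose k : ℂ) * (t : ℂ) ^ (n - k))
          = ((t : ℂ) ^ (k - i) * (t : ℂ) ^ (n - k)) * ((n.choose k : ℂ) / ((k : ℂ) + 1)) * (-1 : ℂ) ^ (n - k) := by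
            ring
        _ = _ := by rw [hpow, hdiv]; ring
    rw [Finset.sum_congr rfl hterm]
    have : ∑ k ∈ Finset.Icc i n,
        (t : ℂ) ^ (n - i) * ((-1 : ℂ) ^ (n - k) * ((n + 1).choose (k + 1) : ℂ))
          * (1 / ((n : ℂ) + 1))
        = (t : ℂ) ^ (n - i) * (∑ k ∈ Finset.Icc i n,
            (-1 : ℂ) ^ (n - k) * ((n + 1).choose (k + 1) : ℂ)) * (1 / ((n : ℂ) + 1)) := by
      rw [Finset.mul_sum, Finset.sum_mul]
    rw [this, tailC n i hin]
    unfold zvec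
    rw [if_pos hin, Nat.choose_symm hin]
    ring
  · -- i > n : everything vanishes
    have h1 : ∀ k ∈ Finset.range (n + 1),
        (if i ≤ k then ((t : ℂ) ^ (k - i) / ((k : ℂ) + 1)) * zvec t n k else 0) = 0 := by
      intro k hk
      rw [Finset.mem_range] at hk
      rw [if_neg (by omega)]
    rw [Finset.sum_congr rfl h1, Finset.sum_const_zero]
    unfold zvec
    rw [if_neg hin, mul_zero]
end

section
/- Let t ∈ [0,1). Then the fixed-point set of C_t on ω is Ker(I − C_t) = span{x^{[0]}}, where x^{[0]} = (t^n)_{n∈ℕ₀}; and the range of I − C_t is (I − C_t)(ω) = {x ∈ ω : x_0 = 0}. In particular, Ker(I − C_t) ∩ (I − C_t)(ω) = {0}. -/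
/-!
Write `S x n = ∑_{i ≤ n} tⁿ⁻ⁱ xᵢ`, so that `(C_t x)ₙ = S x n / (n + 1)` and
`S x (n + 1) = t · S x n + x (n + 1)`. For a fixed point `S x n = (n + 1) xₙ`, and the recurrence
collapses to `x (n + 1) = t xₙ`, so `x` is geometric. For the range, `x ↦ S x` is inverted by
`S ↦ (S 0, S 1 - t S 0, S 2 - t S 1, …)`; prescribing `x - C_t x = y` then becomes a first-order
recurrence for `S`, solvable exactly when `y₀ = 0` since `(C_t x)₀ = x₀`.
-/

open Finset

section WeightedSum

variable {R : Type*} [CommSemiring R]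

def weightedSum (a : R) (x : ℕ → R) (n : ℕ) : R :=
  ∑ i ∈ range (n + 1), a ^ (n - i) * x i

@[simp]
lemma weightedSum_zero (a : R) (x : ℕ → R) : weightedSum a x 0 = x 0 := by
  simp [weightedSum]

lemma weightedSum_succ (a : R) (x : ℕ → R) (n : ℕ) :
    weightedSum a x (n + 1) = a * weightedSum a x n + x (n + 1) := by
  rw [weightedSum, sum_range_succ, Nat.sub_self, pow_zero, one_mul, weightedSum, mul_sum]
  congr 1
  refine sum_congr rfl fun i hi => ?_
  rw [Nat.sub_add_comm (mem_range_succ_iff.mp hi), pow_succ]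
  ring

lemma weightedSum_smul_geom (a c : R) (n : ℕ) :
    weightedSum a (c • fun k => a ^ k) n = (n + 1) * (c * a ^ n) := by
  induction n with
  | zero => simp
  | succ n ih =>
    rw [weightedSum_succ, ih]
    simp only [Pi.smul_apply, smul_eq_mul]
    push_cast
    ring

lemma eq_smul_geom_of_succ {a : R} {x : ℕ → R} (h : ∀ n, x (n + 1) = a * x n) :
    x = x 0 • fun n => a ^ n := by
  funext n
  induction n with
  | zero => simp
  | succ n ih =>
    rw [h, ih]
    simp only [Pi.smul_apply, smul_eq_mul]
    ring

end WeightedSum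

section WeightedDiff

variable {R : Type*} [CommRing R]

def weightedDiff (a : R) (S : ℕ → R) : ℕ → R
  | 0 => S 0
  | n + 1 => S (n + 1) - a * S n

lemma weightedSum_weightedDiff (a : R) (S : ℕ → R) : weightedSum a (weightedDiff a S) = S := by
  funext n
  induction n with
  | zero => rw [weightedSum_zero, weightedDiff]
  | succ n ih => rw [weightedSum_succ, ih, weightedDiff]; ring

end WeightedDiff

section GenCesaro

variable (t : ℝ)

lemma genCesaro_apply (x : ℕ → ℂ) (n : ℕ) :
    genCesaro t x n = weightedSum (t : ℂ) x n / (n + 1) := by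
  rw [genCesaro, weightedSum, one_div, inv_mul_eq_div]

lemma genCesaro_apply_zero (x : ℕ → ℂ) : genCesaro t x 0 = x 0 := by
  simp [genCesaro_apply]

lemma weightedSum_eq_of_genCesaro_eq_self {x : ℕ → ℂ} (h : genCesaro t x = x) (n : ℕ) :
    weightedSum (t : ℂ) x n = (n + 1) * x n := by
  have hn := congrFun h n
  rw [genCesaro_apply, div_eq_iff (Nat.cast_add_one_ne_zero n)] at hn
  rw [hn, mul_comm]

lemma succ_eq_mul_of_genCesaro_eq_self {x : ℕ → ℂ} (h : genCesaro t x = x) (n : ℕ) :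
    x (n + 1) = t * x n := by
  have hsucc := weightedSum_succ (t : ℂ) x n
  rw [weightedSum_eq_of_genCesaro_eq_self t h, weightedSum_eq_of_genCesaro_eq_self t h] at hsucc
  push_cast at hsucc
  exact mul_left_cancel₀ (Nat.cast_add_one_ne_zero n) (by linear_combination hsucc)

lemma genCesaro_smul_geom (c : ℂ) :
    genCesaro t (c • fun n => (t : ℂ) ^ n) = c • fun n => (t : ℂ) ^ n := by
  funext n
  rw [genCesaro_apply, weightedSum_smul_geom, mul_div_cancel_left₀ _ (Nat.cast_add_one_ne_zero n)]
  rfl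

theorem setOf_genCesaro_eq_self :
    {x : ℕ → ℂ | genCesaro t x = x} = Set.range (fun c : ℂ => c • fun n : ℕ => (t : ℂ) ^ n) := by
  ext x
  constructor
  · intro h
    exact ⟨x 0, (eq_smul_geom_of_succ (succ_eq_mul_of_genCesaro_eq_self t h)).symm⟩
  · rintro ⟨c, rfl⟩
    exact genCesaro_smul_geom t c

/-- The partial sums `weightedSum t x` of the preimage `x` of `y` under `I - C_t`. -/
noncomputable def genCesaroPreimageSum (y : ℕ → ℂ) : ℕ → ℂ
  | 0 => 0
  | n + 1 => (n + 2) / (n + 1) * (y (n + 1) + t * genCesaroPreimageSum y n)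

lemma sub_genCesaro_weightedDiff_preimageSum {y : ℕ → ℂ} (hy : y 0 = 0) :
    weightedDiff (t : ℂ) (genCesaroPreimageSum t y) -
      genCesaro t (weightedDiff (t : ℂ) (genCesaroPreimageSum t y)) = y := by
  funext n
  rw [Pi.sub_apply, genCesaro_apply, weightedSum_weightedDiff]
  cases n with
  | zero => simp [weightedDiff, genCesaroPreimageSum, hy]
  | succ n =>
    rw [weightedDiff, genCesaroPreimageSum]
    have h1 : (n : ℂ) + 1 ≠ 0 := Nat.cast_add_one_ne_zero n
    have h2 : ((n + 1 : ℕ) : ℂ) + 1 ≠ 0 := Nat.cast_add_one_ne_zero (n + 1)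
    push_cast at h2 ⊢
    field_simp
    ring

theorem setOf_exists_sub_genCesaro :
    {y : ℕ → ℂ | ∃ x : ℕ → ℂ, y = x - genCesaro t x} = {y : ℕ → ℂ | y 0 = 0} := by
  ext y
  constructor
  · rintro ⟨x, rfl⟩
    simp [genCesaro_apply_zero]
  · intro hy
    exact ⟨_, (sub_genCesaro_weightedDiff_preimageSum t hy).symm⟩

end GenCesaro

theorem genCesaro_ker_range_identity_general (t : ℝ) :
    {x : ℕ → ℂ | genCesaro t x = x} =
      Set.range (fun c : ℂ => c • (fun n : ℕ => (t : ℂ) ^ n)) ∧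
    {y : ℕ → ℂ | ∃ x : ℕ → ℂ, y = x - genCesaro t x} = {y : ℕ → ℂ | y 0 = 0} ∧
    {x : ℕ → ℂ | genCesaro t x = x} ∩
      {y : ℕ → ℂ | ∃ x : ℕ → ℂ, y = x - genCesaro t x} = {0} := by
  refine ⟨setOf_genCesaro_eq_self t, setOf_exists_sub_genCesaro t, ?_⟩
  rw [setOf_genCesaro_eq_self, setOf_exists_sub_genCesaro]
  ext x
  simp only [Set.mem_inter_iff, Set.mem_range, Set.mem_ofPred_eq, Set.mem_singleton_iff]
  constructor
  · rintro ⟨⟨c, rfl⟩, h0⟩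
    simp only [Pi.smul_apply, smul_eq_mul, pow_zero, mul_one] at h0
    simp [h0]
  · rintro rfl
    exact ⟨⟨0, zero_smul ℂ _⟩, rfl⟩

/-- Let `t ∈ [0,1)`. The fixed-point set of `C_t` on `ω = ℂ^ℕ` is
`Ker(I - C_t) = span{x^{[0]}}` with `x^{[0]} = (tⁿ)ₙ`; the range of `I - C_t` is
`{x ∈ ω : x₀ = 0}`; and `Ker(I - C_t) ∩ (I - C_t)(ω) = {0}`. -/
theorem genCesaro_ker_range_identity (t : ℝ) (ht : t ∈ Set.Ico (0 : ℝ) 1) :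
    {x : ℕ → ℂ | genCesaro t x = x} =
      Set.range (fun c : ℂ => c • (fun n : ℕ => (t : ℂ) ^ n)) ∧
    {y : ℕ → ℂ | ∃ x : ℕ → ℂ, y = x - genCesaro t x} = {y : ℕ → ℂ | y 0 = 0} ∧
    {x : ℕ → ℂ | genCesaro t x = x} ∩
      {y : ℕ → ℂ | ∃ x : ℕ → ℂ, y = x - genCesaro t x} = {0} :=
  genCesaro_ker_range_identity_general t
end

section
/- For each t ∈ [0,1), the operator C_t is not supercyclic on ω: there is no complex sequence x such that the projective orbit {λ · C_t^n x : λ ∈ ℂ, n ∈ ℕ₀} is dense in ω. -/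
theorem not_dense_of_subset_isClosed {X : Type*} [TopologicalSpace X] {S F : Set X} {a : X}
    (hF : IsClosed F) (hSF : S ⊆ F) (ha : a ∉ F) : ¬ Dense S := fun hS =>
  ha <| hF.closure_subset_iff.2 hSF (hS a)

def projOrbit (𝕜 : Type*) {E : Type*} [SMul 𝕜 E] (f : E → E) (x : E) : Set E :=
  {y | ∃ (c : 𝕜) (n : ℕ), y = c • f^[n] x}

namespace genCesaro

variable (t : ℝ) (x : ℕ → ℂ)

theorem apply_zero : genCesaro t x 0 = x 0 := by
  simp [genCesaro]

theorem apply_one : genCesaro t x 1 = ((t : ℂ) * x 0 + x 1) / 2 := by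
  simp only [genCesaro, Finset.sum_range_succ, Finset.sum_range_zero]
  norm_num
  ring

theorem iterate_apply_zero (n : ℕ) : (genCesaro t)^[n] x 0 = x 0 := by
  induction n with
  | zero => rfl
  | succ n ih => rw [Function.iterate_succ_apply', apply_zero, ih]

theorem iterate_apply_one (n : ℕ) :
    (genCesaro t)^[n] x 1 = (t : ℂ) * x 0 + (x 1 - (t : ℂ) * x 0) / 2 ^ n := by
  induction n with
  | zero => simp
  | succ n ih =>
    rw [Function.iterate_succ_apply', apply_one, ih, iterate_apply_zero]
    field_simp
    ring

theorem norm_iterate_apply_one_le (n : ℕ) :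
    ‖(genCesaro t)^[n] x 1‖ ≤ ‖(t : ℂ) * x 0‖ + ‖x 1 - (t : ℂ) * x 0‖ := by
  rw [iterate_apply_one]
  refine (norm_add_le _ _).trans (add_le_add le_rfl ?_)
  rw [norm_div, norm_pow, Complex.norm_two]
  exact div_le_self (norm_nonneg _) (one_le_pow₀ one_le_two)

theorem projOrbit_subset_cone :
    projOrbit ℂ (genCesaro t) x ⊆
      {y | ‖x 0‖ * ‖y 1‖ ≤ (‖(t : ℂ) * x 0‖ + ‖x 1 - (t : ℂ) * x 0‖) * ‖y 0‖} := by
  rintro _ ⟨c, n, rfl⟩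
  set K := ‖(t : ℂ) * x 0‖ + ‖x 1 - (t : ℂ) * x 0‖
  rw [Set.mem_ofPred_eq, Pi.smul_apply, Pi.smul_apply, smul_eq_mul, smul_eq_mul, norm_mul,
    norm_mul, iterate_apply_zero]
  calc ‖x 0‖ * (‖c‖ * ‖(genCesaro t)^[n] x 1‖)
      = ‖c‖ * ‖x 0‖ * ‖(genCesaro t)^[n] x 1‖ := by ring
    _ ≤ ‖c‖ * ‖x 0‖ * K := by
      gcongr
      exact norm_iterate_apply_one_le t x n
    _ = K * (‖c‖ * ‖x 0‖) := by ring

theorem projOrbit_subset_of_apply_zero_eq_zero (hx : x 0 = 0) :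
    projOrbit ℂ (genCesaro t) x ⊆ {y | y 0 = 0} := by
  rintro _ ⟨c, n, rfl⟩
  simp [iterate_apply_zero, hx]

theorem not_dense_projOrbit : ¬ Dense (projOrbit ℂ (genCesaro t) x) := by
  by_cases hx : x 0 = 0
  · refine not_dense_of_subset_isClosed (isClosed_eq (continuous_apply 0) continuous_const)
      (projOrbit_subset_of_apply_zero_eq_zero t x hx) (a := fun _ => 1) (by simp)
  · refine not_dense_of_subset_isClosed (isClosed_le (by fun_prop) (by fun_prop))
      (projOrbit_subset_cone t x) (a := Pi.single 1 1) (by simp [hx])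

end genCesaro

theorem genCesaro_not_supercyclic_general (t : ℝ) :
    ¬ ∃ x : ℕ → ℂ,
      Dense {y : ℕ → ℂ | ∃ (c : ℂ) (n : ℕ), y = c • (genCesaro t)^[n] x} :=
  fun ⟨x, hx⟩ => genCesaro.not_dense_projOrbit t x hx

/-- For each `t ∈ [0,1)`, the operator `C_t` is not supercyclic on `ω = ℂ^ℕ`
(product topology): there is no sequence `x` whose projective orbit
`{λ · C_tⁿ x : λ ∈ ℂ, n ∈ ℕ}` is dense in `ω`. -/
theorem genCesaro_not_supercyclic (t : ℝ) (ht : t ∈ Set.Ico (0 : ℝ) 1) :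
    ¬ ∃ x : ℕ → ℂ,
      Dense {y : ℕ → ℂ | ∃ (c : ℂ) (n : ℕ), y = c • (genCesaro t)^[n] x} :=
  genCesaro_not_supercyclic_general t
end

section
/- Let 1 ≤ p < ∞ and t ∈ [0,1). Let S be the right-shift on ℓ^p, (Sx) = (0, x_0, x_1, …), and D_φ the diagonal operator (D_φ x)_n = x_n/(n+1). Then the series ∑_{n=0}^∞ t^n D_φ S^n converges absolutely in the operator norm of bounded operators on ℓ^p, its sum equals the generalized Cesàro operator C_t, and in particular C_t = D_φ R_t where R_t = ∑_{n=0}^∞ t^n S^n is a bounded operator on ℓ^p with ‖R_t‖ ≤ 1/(1−t). -/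
open scoped ENNReal

/-! The shift is nonexpansive on every `ℓ^p`, so `‖tⁿ Sⁿ‖ ≤ tⁿ` and both operator series are
dominated by the geometric series. Coordinate `k` of `Sⁿ x` vanishes for `n > k`, so the `k`-th
coordinate of `R_t x = ∑ tⁿ Sⁿ x` is the finite sum `∑_{i ≤ k} t^{k-i} x_i`; dividing by `k + 1`
gives `(C_t x)_k`. -/

namespace lp

variable {𝕜 E : Type*} [NontriviallyNormedField 𝕜] [NormedAddCommGroup E] [NormedSpace 𝕜 E]
  {p : ℝ≥0∞} [Fact (1 ≤ p)]

theorem norm_le_of_eq_shift {x y : lp (fun _ : ℕ => E) p}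
    (h : ∀ n, (y : ℕ → E) n = if n = 0 then 0 else (x : ℕ → E) (n - 1)) : ‖y‖ ≤ ‖x‖ := by
  rcases p.trichotomy with rfl | rfl | hp
  · exact absurd (Fact.out : (1 : ℝ≥0∞) ≤ 0) (by norm_num)
  · refine norm_le_of_forall_le (norm_nonneg x) fun n => ?_
    rw [h]
    split_ifs
    · simp
    · exact norm_apply_le_norm ENNReal.top_ne_zero x _
  · refine norm_le_of_tsum_le hp (norm_nonneg x) ?_
    rw [((lp.memℓp y).summable hp).tsum_eq_zero_add, norm_rpow_eq_tsum hp]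
    simp [h, Real.zero_rpow hp.ne']

variable {S : lp (fun _ : ℕ => E) p →L[𝕜] lp (fun _ : ℕ => E) p}
  (hS : ∀ x n, (S x : ℕ → E) n = if n = 0 then 0 else (x : ℕ → E) (n - 1))
include hS

theorem norm_shift_pow_le_one (n : ℕ) : ‖S ^ n‖ ≤ 1 := by
  refine ContinuousLinearMap.opNorm_le_bound _ zero_le_one fun x => ?_
  rw [one_mul]
  induction n with
  | zero => simp
  | succ n ih =>
    rw [pow_succ', mul_apply_eq_comp]
    exact (norm_le_of_eq_shift (hS _)).trans ih

theorem shift_pow_apply (n : ℕ) (x : lp (fun _ : ℕ => E) p) (k : ℕ) :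
    ((S ^ n) x : ℕ → E) k = if k < n then 0 else (x : ℕ → E) (k - n) := by
  induction n generalizing k with
  | zero => simp
  | succ n ih =>
    rw [pow_succ', mul_apply_eq_comp, hS, ih]
    cases k <;> simp

theorem apply_eq_sum_of_hasSum_smul_shift_pow {c : 𝕜}
    {R : lp (fun _ : ℕ => E) p →L[𝕜] lp (fun _ : ℕ => E) p}
    (hR : HasSum (fun n => c ^ n • S ^ n) R) (x : lp (fun _ : ℕ => E) p) (k : ℕ) :
    (R x : ℕ → E) k = ∑ i ∈ Finset.range (k + 1), c ^ (k - i) • (x : ℕ → E) i := by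
  have hcoord : HasSum (fun n => c ^ n • ((S ^ n) x : ℕ → E) k) ((R x : ℕ → E) k) :=
    (hR.mapL (ContinuousLinearMap.apply 𝕜 _ x)).mapL (evalCLM 𝕜 (fun _ : ℕ => E) p k)
  have hfin : HasSum (fun n => c ^ n • ((S ^ n) x : ℕ → E) k)
      (∑ n ∈ Finset.range (k + 1), c ^ n • ((S ^ n) x : ℕ → E) k) := by
    refine hasSum_sum_of_ne_finset_zero fun n hn => ?_
    rw [shift_pow_apply hS, if_pos (by simpa using hn), smul_zero]
  rw [hcoord.unique hfin, ← Finset.sum_range_reflect]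
  refine Finset.sum_congr rfl fun i hi => ?_
  have hik : i ≤ k := Nat.lt_succ_iff.mp (Finset.mem_range.mp hi)
  rw [shift_pow_apply hS, if_neg (by omega), Nat.add_sub_cancel, Nat.sub_sub_self hik]

end lp

section GeometricSeries

variable {𝕜 A : Type*} [NormedField 𝕜] [SeminormedRing A] [NormedSpace 𝕜 A] {a : A}
  (ha : ∀ n : ℕ, ‖a ^ n‖ ≤ 1) (c : 𝕜)
include ha

theorem norm_smul_pow_le_of_norm_pow_le_one (n : ℕ) : ‖c ^ n • a ^ n‖ ≤ ‖c‖ ^ n :=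
  calc ‖c ^ n • a ^ n‖ ≤ ‖c‖ ^ n * ‖a ^ n‖ := by simpa using norm_smul_le (c ^ n) (a ^ n)
    _ ≤ ‖c‖ ^ n := mul_le_of_le_one_right (by positivity) (ha n)

theorem summable_norm_smul_pow_of_norm_pow_le_one (hc : ‖c‖ < 1) :
    Summable fun n => ‖c ^ n • a ^ n‖ :=
  (summable_geometric_of_lt_one (norm_nonneg c) hc).of_nonneg_of_le (fun _ => norm_nonneg _)
    (norm_smul_pow_le_of_norm_pow_le_one ha c)

theorem norm_le_of_hasSum_smul_pow_of_norm_pow_le_one {b : A}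
    (hb : HasSum (fun n => c ^ n • a ^ n) b) (hc : ‖c‖ < 1) : ‖b‖ ≤ (1 - ‖c‖)⁻¹ :=
  hb.norm_le_of_bounded (hasSum_geometric_of_lt_one (norm_nonneg c) hc)
    (norm_smul_pow_le_of_norm_pow_le_one ha c)

end GeometricSeries

theorem genCesaro_factorization_lp_general (p : ℝ≥0∞) [Fact (1 ≤ p)]
    (t : ℝ) (ht : t ∈ Set.Ico (0 : ℝ) 1)
    (S D C : lp (fun _ : ℕ => ℂ) p →L[ℂ] lp (fun _ : ℕ => ℂ) p)
    (hS : ∀ (x : lp (fun _ : ℕ => ℂ) p) (n : ℕ),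
      (S x : ℕ → ℂ) n = if n = 0 then 0 else (x : ℕ → ℂ) (n - 1))
    (hD : ∀ (x : lp (fun _ : ℕ => ℂ) p) (n : ℕ),
      (D x : ℕ → ℂ) n = (x : ℕ → ℂ) n / ((n : ℂ) + 1))
    (hC : ∀ (x : lp (fun _ : ℕ => ℂ) p) (n : ℕ),
      (C x : ℕ → ℂ) n =
        (1 / ((n : ℂ) + 1)) * ∑ i ∈ Finset.range (n + 1), (t : ℂ) ^ (n - i) * (x : ℕ → ℂ) i) :
    Summable (fun n : ℕ => ‖(t : ℂ) ^ n • (D ∘L S ^ n)‖) ∧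
    HasSum (fun n : ℕ => (t : ℂ) ^ n • (D ∘L S ^ n)) C ∧
    ∃ R : lp (fun _ : ℕ => ℂ) p →L[ℂ] lp (fun _ : ℕ => ℂ) p,
      HasSum (fun n : ℕ => (t : ℂ) ^ n • (S ^ n)) R ∧
      ‖R‖ ≤ 1 / (1 - t) ∧ C = D ∘L R := by
  have hSn := lp.norm_shift_pow_le_one hS
  have htn : ‖(t : ℂ)‖ = t := by rw [Complex.norm_real, Real.norm_of_nonneg ht.1]
  have htc : ‖(t : ℂ)‖ < 1 := htn.symm ▸ ht.2
  have hRsum := summable_norm_smul_pow_of_norm_pow_le_one hSn _ htc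
  obtain ⟨R, hR⟩ := hRsum.of_norm
  have hCR : C = D ∘L R := by
    ext x k
    rw [hC, ContinuousLinearMap.comp_apply, hD, lp.apply_eq_sum_of_hasSum_smul_shift_pow hS hR]
    simp [div_eq_inv_mul]
  have hcomp (n : ℕ) : (t : ℂ) ^ n • (D ∘L S ^ n) = D ∘L ((t : ℂ) ^ n • S ^ n) :=
    (ContinuousLinearMap.comp_smul D _ _).symm
  simp_rw [hcomp]
  refine ⟨(hRsum.mul_left ‖D‖).of_nonneg_of_le (fun _ => norm_nonneg _)
      fun n => ContinuousLinearMap.opNorm_comp_le _ _, ?_, R, hR, ?_, hCR⟩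
  · rw [hCR]
    exact hR.mapL (ContinuousLinearMap.compL ℂ _ _ _ D)
  · rw [one_div, ← htn]
    exact norm_le_of_hasSum_smul_pow_of_norm_pow_le_one hSn _ hR htc

/-- Let `1 ≤ p < ∞` and `t ∈ [0,1)`. Let `S` be the right shift on `ℓ^p`, `D_φ` the
diagonal operator `(D_φ x)_n = x_n/(n+1)`, and `C_t` the generalized Cesàro operator
(all given by their coordinate formulas). Then the series `∑ tⁿ D_φ Sⁿ` converges
absolutely in operator norm to `C_t`; in particular `C_t = D_φ R_t` where
`R_t = ∑ tⁿ Sⁿ` is a bounded operator with `‖R_t‖ ≤ 1/(1-t)`. -/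
theorem genCesaro_factorization_lp (p : ℝ≥0∞) [Fact (1 ≤ p)] (hp : p ≠ ⊤)
    (t : ℝ) (ht : t ∈ Set.Ico (0 : ℝ) 1)
    (S D C : lp (fun _ : ℕ => ℂ) p →L[ℂ] lp (fun _ : ℕ => ℂ) p)
    (hS : ∀ (x : lp (fun _ : ℕ => ℂ) p) (n : ℕ),
      (S x : ℕ → ℂ) n = if n = 0 then 0 else (x : ℕ → ℂ) (n - 1))
    (hD : ∀ (x : lp (fun _ : ℕ => ℂ) p) (n : ℕ),
      (D x : ℕ → ℂ) n = (x : ℕ → ℂ) n / ((n : ℂ) + 1))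
    (hC : ∀ (x : lp (fun _ : ℕ => ℂ) p) (n : ℕ),
      (C x : ℕ → ℂ) n =
        (1 / ((n : ℂ) + 1)) * ∑ i ∈ Finset.range (n + 1), (t : ℂ) ^ (n - i) * (x : ℕ → ℂ) i) :
    Summable (fun n : ℕ => ‖(t : ℂ) ^ n • (D ∘L S ^ n)‖) ∧
    HasSum (fun n : ℕ => (t : ℂ) ^ n • (D ∘L S ^ n)) C ∧
    ∃ R : lp (fun _ : ℕ => ℂ) p →L[ℂ] lp (fun _ : ℕ => ℂ) p,
      HasSum (fun n : ℕ => (t : ℂ) ^ n • (S ^ n)) R ∧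
      ‖R‖ ≤ 1 / (1 - t) ∧ C = D ∘L R :=
  genCesaro_factorization_lp_general p t ht S D C hS hD hC
end

section
/- Let 1 ≤ p < ∞ and t ∈ [0,1), and regard C_t as a bounded linear operator on ℓ^p. Then the iterates C_t^n converge in operator norm, as n → ∞, to the rank-one projection P given by P x = x_0 · (t^k)_{k∈ℕ₀}. In particular, C_t is power bounded (sup_{n∈ℕ} ‖C_t^n‖ < ∞) and uniformly mean ergodic: the Cesàro means (1/n) ∑_{m=1}^n C_t^m converge in operator norm (to P). -/
open scoped ENNReal
open Filter Finset

section Aux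

variable {t : ℝ}

lemma norm_inv_nat_succ (n : ℕ) : ‖1/((n:ℂ)+1)‖ = ((n:ℝ)+1)⁻¹ := by
  rw [norm_div, norm_one, one_div]
  congr 1
  have h : ((n:ℂ)+1) = ((n+1 : ℕ) : ℂ) := by push_cast; ring
  rw [h, Complex.norm_natCast]
  push_cast; ring

lemma sum_geom_le (ht0 : 0 ≤ t) (ht1 : t < 1) (s : Finset ℕ) (f : ℕ → ℕ)
    (hf : ∀ a ∈ s, ∀ b ∈ s, f a = f b → a = b) : ∑ i ∈ s, t ^ f i ≤ (1 - t)⁻¹ := by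
  have himg : ∑ j ∈ s.image f, t ^ j = ∑ i ∈ s, t ^ f i := Finset.sum_image hf
  rw [← himg]
  refine (Summable.sum_le_tsum _ (fun j _ => pow_nonneg ht0 j)
    (summable_geometric_of_lt_one ht0 ht1)).trans ?_
  rw [tsum_geometric_of_lt_one ht0 ht1]

lemma weighted_rpow_sum_le {ι : Type*} (s : Finset ι) (k u : ι → ℝ)
    (hk : ∀ i ∈ s, 0 ≤ k i) (hu : ∀ i ∈ s, 0 ≤ u i) {q : ℝ} (hq : 1 ≤ q) :
    (∑ i ∈ s, k i * u i) ^ q ≤ (∑ i ∈ s, k i) ^ (q - 1) * ∑ i ∈ s, k i * u i ^ q := by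
  have hq0 : (0:ℝ) < q := by linarith
  set K := ∑ i ∈ s, k i with hK
  have hK0 : 0 ≤ K := Finset.sum_nonneg hk
  rcases eq_or_lt_of_le hK0 with h0 | hKpos
  · have hzero : ∀ i ∈ s, k i = 0 :=
      (Finset.sum_eq_zero_iff_of_nonneg hk).mp h0.symm
    have h1 : (∑ i ∈ s, k i * u i) = 0 :=
      Finset.sum_eq_zero (fun i hi => by rw [hzero i hi, zero_mul])
    have h2 : (∑ i ∈ s, k i * u i ^ q) = 0 :=
      Finset.sum_eq_zero (fun i hi => by rw [hzero i hi, zero_mul])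
    rw [h1, h2, mul_zero, Real.zero_rpow hq0.ne']
  · have hw' : ∑ i ∈ s, k i / K = 1 := by
      rw [← Finset.sum_div, ← hK, div_self hKpos.ne']
    have hmean := Real.rpow_arith_mean_le_arith_mean_rpow s (fun i => k i / K) u
      (fun i hi => div_nonneg (hk i hi) hK0) hw' hu hq
    have lhs_eq : (∑ i ∈ s, k i / K * u i) = (∑ i ∈ s, k i * u i) / K := by
      rw [eq_div_iff hKpos.ne', Finset.sum_mul]
      exact Finset.sum_congr rfl (fun i _ => by field_simp)
    have rhs_eq : (∑ i ∈ s, k i / K * u i ^ q) = (∑ i ∈ s, k i * u i ^ q) / K := by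
      rw [eq_div_iff hKpos.ne', Finset.sum_mul]
      exact Finset.sum_congr rfl (fun i _ => by field_simp)
    rw [lhs_eq, rhs_eq] at hmean
    have hsum0 : 0 ≤ ∑ i ∈ s, k i * u i :=
      Finset.sum_nonneg (fun i hi => mul_nonneg (hk i hi) (hu i hi))
    rw [Real.div_rpow hsum0 hK0] at hmean
    have := mul_le_mul_of_nonneg_left hmean (Real.rpow_nonneg hK0 q)
    calc (∑ i ∈ s, k i * u i) ^ q
        = K ^ q * ((∑ i ∈ s, k i * u i) ^ q / K ^ q) := by
          field_simp
      _ ≤ K ^ q * ((∑ i ∈ s, k i * u i ^ q) / K) := this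
      _ = K ^ (q-1) * ∑ i ∈ s, k i * u i ^ q := by
          rw [Real.rpow_sub_one hKpos.ne' q]
          field_simp

lemma geom_dom (σ a b : ℝ) (hσ0 : 0 < σ) (hσ1 : σ < 1) (ha : 0 ≤ a) (hb : 0 ≤ b) :
    ∃ M ρ : ℝ, 0 ≤ M ∧ 0 ≤ ρ ∧ ρ < 1 ∧
      ∀ n : ℕ, a * σ ^ n + b * ((n:ℝ) * σ ^ n) ≤ M * ρ ^ n := by
  set ρ := (σ + 1) / 2 with hρ
  have hρ0 : 0 < ρ := by rw [hρ]; linarith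
  have hρ1 : ρ < 1 := by rw [hρ]; linarith
  have hσρ : σ < ρ := by rw [hρ]; linarith
  set c := σ / ρ with hc
  have hc0 : 0 ≤ c := div_nonneg hσ0.le hρ0.le
  have hc1 : c < 1 := by rw [hc, div_lt_one hρ0]; exact hσρ
  have hsum : Summable (fun n : ℕ => (n:ℝ) * c ^ n) := by
    have := summable_pow_mul_geometric_of_norm_lt_one (R := ℝ) 1
      (by rw [Real.norm_eq_abs, abs_of_nonneg hc0]; exact hc1)
    simpa using this
  set T := ∑' n : ℕ, (n:ℝ) * c ^ n with hT
  have hT0 : 0 ≤ T := tsum_nonneg (fun n => mul_nonneg (Nat.cast_nonneg n) (pow_nonneg hc0 n))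
  refine ⟨a + b * T, ρ, by positivity, hρ0.le, hρ1, fun n => ?_⟩
  have hσcρ : σ = c * ρ := by rw [hc]; field_simp
  have h1 : a * σ ^ n ≤ a * ρ ^ n := by
    apply mul_le_mul_of_nonneg_left _ ha
    exact pow_le_pow_left₀ hσ0.le hσρ.le n
  have h2 : (n:ℝ) * c ^ n ≤ T :=
    Summable.le_tsum hsum n (fun m _ => mul_nonneg (Nat.cast_nonneg m) (pow_nonneg hc0 m))
  have h3 : b * ((n:ℝ) * σ ^ n) ≤ b * T * ρ ^ n := by
    rw [hσcρ, mul_pow]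
    calc b * ((n:ℝ) * (c ^ n * ρ ^ n)) = b * ((n:ℝ) * c ^ n) * ρ ^ n := by ring
      _ ≤ b * T * ρ ^ n := by
          apply mul_le_mul_of_nonneg_right _ (pow_nonneg hρ0.le n)
          exact mul_le_mul_of_nonneg_left h2 hb
  calc a * σ ^ n + b * ((n:ℝ) * σ ^ n) ≤ a * ρ ^ n + b * T * ρ ^ n := add_le_add h1 h3
    _ = (a + b * T) * ρ ^ n := by ring

end Aux


section Op

variable {p : ℝ≥0∞} [Fact (1 ≤ p)] {t : ℝ}
variable {C : lp (fun _ : ℕ => ℂ) p →L[ℂ] lp (fun _ : ℕ => ℂ) p}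

lemma p_ne_zero' : p ≠ 0 := by
  have h := Fact.out (p := 1 ≤ p)
  intro h0
  rw [h0] at h
  simp at h

lemma one_le_q (hp : p ≠ ⊤) : 1 ≤ p.toReal := by
  have h := Fact.out (p := 1 ≤ p)
  simpa using ENNReal.toReal_mono hp h

lemma cesaro_vanish
    (hC : ∀ (x : lp (fun _ : ℕ => ℂ) p) (n : ℕ),
      (C x : ℕ → ℂ) n =
        (1 / ((n : ℂ) + 1)) * ∑ i ∈ Finset.range (n + 1), (t : ℂ) ^ (n - i) * (x : ℕ → ℂ) i)
    {r : ℕ} (x : lp (fun _ : ℕ => ℂ) p) (hx : ∀ m, m < r → (x : ℕ → ℂ) m = 0)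
    {n : ℕ} (hn : n < r) : (C x : ℕ → ℂ) n = 0 := by
  rw [hC]
  rw [Finset.sum_eq_zero, mul_zero]
  intro i hi
  rw [Finset.mem_range] at hi
  rw [hx i (by omega), mul_zero]

lemma cesaro_contract (hp : p ≠ ⊤) (ht : t ∈ Set.Ico (0:ℝ) 1)
    (hC : ∀ (x : lp (fun _ : ℕ => ℂ) p) (n : ℕ),
      (C x : ℕ → ℂ) n =
        (1 / ((n : ℂ) + 1)) * ∑ i ∈ Finset.range (n + 1), (t : ℂ) ^ (n - i) * (x : ℕ → ℂ) i)
    (r : ℕ) (x : lp (fun _ : ℕ => ℂ) p) (hx : ∀ m, m < r → (x : ℕ → ℂ) m = 0) :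
    ‖C x‖ ≤ (((r:ℝ)+1) * (1 - t))⁻¹ * ‖x‖ := by
  obtain ⟨ht0, ht1⟩ := ht
  have h1t : (0:ℝ) < 1 - t := by linarith
  have hq1 : 1 ≤ p.toReal := one_le_q hp
  have hq0 : (0:ℝ) < p.toReal := by linarith
  set q := p.toReal with hqdef
  set A : ℝ := (((r:ℝ)+1) * (1 - t))⁻¹ with hA
  have hA0 : (0:ℝ) < A := by positivity
  set k : ℕ → ℕ → ℝ := fun n i => t ^ (n - i) / ((n:ℝ)+1) with hk
  have hknn : ∀ n i, 0 ≤ k n i := fun n i => by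
    rw [hk]; positivity
  -- coordinatewise bound
  have coordb : ∀ n : ℕ, ‖(C x : ℕ → ℂ) n‖ ≤ ∑ i ∈ Finset.Icc r n, k n i * ‖(x : ℕ → ℂ) i‖ := by
    intro n
    rw [hC]
    have hsum : ∑ i ∈ Finset.range (n+1), (t:ℂ) ^ (n-i) * (x : ℕ→ℂ) i
        = ∑ i ∈ Finset.Icc r n, (t:ℂ) ^ (n-i) * (x : ℕ→ℂ) i := by
      refine (Finset.sum_subset ?_ ?_).symm
      · intro i hi
        simp only [Finset.mem_range, Finset.mem_Icc] at *
        omega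
      · intro i hi hni
        simp only [Finset.mem_range, Finset.mem_Icc] at hi hni
        rw [hx i (by omega), mul_zero]
    rw [hsum, norm_mul, norm_inv_nat_succ]
    calc ((n:ℝ)+1)⁻¹ * ‖∑ i ∈ Finset.Icc r n, (t:ℂ)^(n-i) * (x : ℕ→ℂ) i‖
        ≤ ((n:ℝ)+1)⁻¹ * ∑ i ∈ Finset.Icc r n, t^(n-i) * ‖(x : ℕ→ℂ) i‖ := by
          refine mul_le_mul_of_nonneg_left ?_ (by positivity)
          refine (norm_sum_le _ _).trans ?_
          refine Finset.sum_le_sum (fun i _ => ?_)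
          rw [norm_mul, norm_pow, Complex.norm_real, Real.norm_eq_abs, abs_of_nonneg ht0]
      _ = ∑ i ∈ Finset.Icc r n, k n i * ‖(x : ℕ→ℂ) i‖ := by
          rw [Finset.mul_sum]
          refine Finset.sum_congr rfl (fun i _ => ?_)
          rw [hk]
          ring
  -- row sums are at most A
  have hrow : ∀ n : ℕ, ∑ i ∈ Finset.Icc r n, k n i ≤ A := by
    intro n
    rcases Nat.lt_or_ge n r with h | h
    · rw [Finset.Icc_eq_empty (by omega), Finset.sum_empty]
      exact hA0.le
    · calc ∑ i ∈ Finset.Icc r n, k n i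
          ≤ ∑ i ∈ Finset.Icc r n, t^(n-i) / ((r:ℝ)+1) := by
            refine Finset.sum_le_sum (fun i hi => ?_)
            simp only [hk]
            rw [div_le_div_iff₀ (by positivity) (by positivity)]
            refine mul_le_mul_of_nonneg_left ?_ (pow_nonneg ht0 _)
            have : r + 1 ≤ n + 1 := by omega
            exact_mod_cast this
        _ = (∑ i ∈ Finset.Icc r n, t^(n-i)) / ((r:ℝ)+1) := by
            rw [← Finset.sum_div]
        _ ≤ (1-t)⁻¹ / ((r:ℝ)+1) := by
            gcongr
            refine sum_geom_le ht0 ht1 _ _ (fun a ha b hb hab => ?_)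
            simp only [Finset.mem_Icc] at ha hb
            omega
        _ = A := by
            rw [hA, mul_inv, div_eq_mul_inv, mul_comm]
  -- per-coordinate q-power bound
  have coordq : ∀ n : ℕ, ‖(C x : ℕ→ℂ) n‖ ^ q
      ≤ A ^ (q-1) * ∑ i ∈ Finset.Icc r n, k n i * ‖(x : ℕ→ℂ) i‖ ^ q := by
    intro n
    have h2 : ‖(C x : ℕ→ℂ) n‖ ^ q ≤ (∑ i ∈ Finset.Icc r n, k n i * ‖(x : ℕ→ℂ) i‖) ^ q :=
      Real.rpow_le_rpow (norm_nonneg _) (coordb n) hq0.le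
    have h3 := weighted_rpow_sum_le (Finset.Icc r n) (k n) (fun i => ‖(x : ℕ→ℂ) i‖)
      (fun i _ => hknn n i) (fun i _ => norm_nonneg _) hq1
    have h4 : (∑ i ∈ Finset.Icc r n, k n i) ^ (q-1) ≤ A ^ (q-1) :=
      Real.rpow_le_rpow (Finset.sum_nonneg (fun i _ => hknn n i)) (hrow n) (by linarith)
    refine h2.trans (h3.trans ?_)
    refine mul_le_mul_of_nonneg_right h4 ?_
    exact Finset.sum_nonneg (fun i _ => mul_nonneg (hknn n i) (Real.rpow_nonneg (norm_nonneg _) q))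
  -- column sums
  have hcol : ∀ (s : Finset ℕ) (i : ℕ),
      ∑ n ∈ s, (if i ∈ Finset.Icc r n then k n i * ‖(x : ℕ→ℂ) i‖ ^ q else 0)
        ≤ A * ‖(x : ℕ→ℂ) i‖ ^ q := by
    intro s i
    by_cases hir : r ≤ i
    · calc ∑ n ∈ s, (if i ∈ Finset.Icc r n then k n i * ‖(x : ℕ→ℂ) i‖ ^ q else 0)
          ≤ ∑ n ∈ s.filter (fun n => i ≤ n), t^(n-i) / ((i:ℝ)+1) * ‖(x : ℕ→ℂ) i‖ ^ q := by
            rw [Finset.sum_filter]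
            refine Finset.sum_le_sum (fun n _ => ?_)
            by_cases h : i ∈ Finset.Icc r n
            · rw [if_pos h]
              simp only [Finset.mem_Icc] at h
              rw [if_pos h.2]
              simp only [hk]
              refine mul_le_mul_of_nonneg_right ?_ (Real.rpow_nonneg (norm_nonneg _) q)
              rw [div_le_div_iff₀ (by positivity) (by positivity)]
              refine mul_le_mul_of_nonneg_left ?_ (pow_nonneg ht0 _)
              have : i + 1 ≤ n + 1 := by omega
              exact_mod_cast this
            · rw [if_neg h]
              split <;> positivity
        _ = (∑ n ∈ s.filter (fun n => i ≤ n), t^(n-i)) * (((i:ℝ)+1)⁻¹ * ‖(x : ℕ→ℂ) i‖ ^ q) := by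
            rw [Finset.sum_mul]
            refine Finset.sum_congr rfl (fun n _ => by ring)
        _ ≤ (1-t)⁻¹ * (((i:ℝ)+1)⁻¹ * ‖(x : ℕ→ℂ) i‖ ^ q) := by
            refine mul_le_mul_of_nonneg_right ?_ (by positivity)
            refine sum_geom_le ht0 ht1 _ _ (fun a ha b hb hab => ?_)
            simp only [Finset.mem_filter] at ha hb
            omega
        _ ≤ A * ‖(x : ℕ→ℂ) i‖ ^ q := by
            have hri : ((i:ℝ)+1)⁻¹ ≤ ((r:ℝ)+1)⁻¹ := by
              refine inv_anti₀ (by positivity) ?_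
              exact_mod_cast (by omega : r + 1 ≤ i + 1)
            calc (1-t)⁻¹ * (((i:ℝ)+1)⁻¹ * ‖(x : ℕ→ℂ) i‖ ^ q)
                = ((1-t)⁻¹ * ((i:ℝ)+1)⁻¹) * ‖(x : ℕ→ℂ) i‖ ^ q := by ring
              _ ≤ ((1-t)⁻¹ * ((r:ℝ)+1)⁻¹) * ‖(x : ℕ→ℂ) i‖ ^ q := by
                  refine mul_le_mul_of_nonneg_right
                    (mul_le_mul_of_nonneg_left hri (by positivity))
                    (Real.rpow_nonneg (norm_nonneg _) q)
              _ = A * ‖(x : ℕ→ℂ) i‖ ^ q := by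
                  rw [hA, mul_inv]
                  ring
    · have hxi : (x : ℕ→ℂ) i = 0 := hx i (by omega)
      have : ∀ n ∈ s, (if i ∈ Finset.Icc r n then k n i * ‖(x : ℕ→ℂ) i‖ ^ q else 0) = 0 := by
        intro n _
        split
        · rw [hxi, norm_zero, Real.zero_rpow hq0.ne', mul_zero]
        · rfl
      rw [Finset.sum_eq_zero this]
      positivity
  -- assemble
  refine lp.norm_le_of_forall_sum_le hq0 (by positivity) (fun s => ?_)
  obtain ⟨N, hN⟩ := Finset.exists_nat_subset_range s
  have key : ∑ n ∈ s, (∑ i ∈ Finset.Icc r n, k n i * ‖(x : ℕ→ℂ) i‖ ^ q) ≤ A * ‖x‖ ^ q := by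
    have hre : ∀ n ∈ s, ∑ i ∈ Finset.Icc r n, k n i * ‖(x : ℕ→ℂ) i‖ ^ q
        = ∑ i ∈ Finset.range N, (if i ∈ Finset.Icc r n then k n i * ‖(x : ℕ→ℂ) i‖ ^ q else 0) := by
      intro n hn
      rw [Finset.sum_ite_mem, Finset.inter_eq_right.mpr]
      intro i hi
      simp only [Finset.mem_Icc] at hi
      have : n < N := Finset.mem_range.mp (hN hn)
      exact Finset.mem_range.mpr (by omega)
    calc ∑ n ∈ s, (∑ i ∈ Finset.Icc r n, k n i * ‖(x : ℕ→ℂ) i‖ ^ q)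
        = ∑ n ∈ s, ∑ i ∈ Finset.range N,
            (if i ∈ Finset.Icc r n then k n i * ‖(x : ℕ→ℂ) i‖ ^ q else 0) :=
          Finset.sum_congr rfl hre
      _ = ∑ i ∈ Finset.range N, ∑ n ∈ s,
            (if i ∈ Finset.Icc r n then k n i * ‖(x : ℕ→ℂ) i‖ ^ q else 0) := Finset.sum_comm
      _ ≤ ∑ i ∈ Finset.range N, A * ‖(x : ℕ→ℂ) i‖ ^ q :=
          Finset.sum_le_sum (fun i _ => hcol s i)
      _ = A * ∑ i ∈ Finset.range N, ‖(x : ℕ→ℂ) i‖ ^ q := by rw [Finset.mul_sum]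
      _ ≤ A * ‖x‖ ^ q := by
          refine mul_le_mul_of_nonneg_left ?_ hA0.le
          exact lp.sum_rpow_le_norm_rpow hq0 x _
  calc ∑ n ∈ s, ‖(C x : ℕ→ℂ) n‖ ^ q
      ≤ ∑ n ∈ s, A ^ (q-1) * (∑ i ∈ Finset.Icc r n, k n i * ‖(x : ℕ→ℂ) i‖ ^ q) :=
        Finset.sum_le_sum (fun n _ => coordq n)
    _ = A ^ (q-1) * ∑ n ∈ s, (∑ i ∈ Finset.Icc r n, k n i * ‖(x : ℕ→ℂ) i‖ ^ q) := by
        rw [Finset.mul_sum]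
    _ ≤ A ^ (q-1) * (A * ‖x‖ ^ q) := by
        refine mul_le_mul_of_nonneg_left key (Real.rpow_nonneg hA0.le _)
    _ = (A * ‖x‖) ^ q := by
        rw [Real.mul_rpow hA0.le (norm_nonneg _)]
        rw [show A ^ (q-1) * (A * ‖x‖ ^ q) = (A ^ (q-1) * A) * ‖x‖ ^ q by ring]
        congr 1
        nth_rewrite 2 [← Real.rpow_one A]
        rw [← Real.rpow_add hA0]
        norm_num

lemma powers_on_Vr (hp : p ≠ ⊤) (ht : t ∈ Set.Ico (0:ℝ) 1)
    (hC : ∀ (x : lp (fun _ : ℕ => ℂ) p) (n : ℕ),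
      (C x : ℕ → ℂ) n =
        (1 / ((n : ℂ) + 1)) * ∑ i ∈ Finset.range (n + 1), (t : ℂ) ^ (n - i) * (x : ℕ → ℂ) i)
    (r : ℕ) : ∀ (n : ℕ) (x : lp (fun _ : ℕ => ℂ) p), (∀ m, m < r → (x : ℕ → ℂ) m = 0) →
      (∀ m, m < r → ((C^n) x : ℕ → ℂ) m = 0) ∧
        ‖(C^n) x‖ ≤ ((((r:ℝ)+1) * (1 - t))⁻¹) ^ n * ‖x‖ := by
  have h1t : (0:ℝ) < 1 - t := by linarith [ht.2]
  have hA0 : (0:ℝ) < (((r:ℝ)+1) * (1 - t))⁻¹ := by positivity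
  intro n
  induction n with
  | zero =>
    intro x hx
    simp only [pow_zero, ContinuousLinearMap.one_apply, one_mul]
    exact ⟨hx, le_refl _⟩
  | succ n ih =>
    intro x hx
    have hCx : ∀ m, m < r → (C x : ℕ → ℂ) m = 0 := fun m hm => cesaro_vanish hC x hx hm
    have h1 := ih (C x) hCx
    have heq : (C^(n+1)) x = (C^n) (C x) := by
      rw [pow_succ, ContinuousLinearMap.mul_apply]
    constructor
    · intro m hm
      rw [heq]
      exact h1.1 m hm
    · rw [heq]
      refine h1.2.trans ?_
      have h2 : ‖C x‖ ≤ (((r:ℝ)+1) * (1 - t))⁻¹ * ‖x‖ := cesaro_contract hp ht hC r x hx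
      calc ((((r:ℝ)+1) * (1 - t))⁻¹) ^ n * ‖C x‖
          ≤ ((((r:ℝ)+1) * (1 - t))⁻¹) ^ n * ((((r:ℝ)+1) * (1 - t))⁻¹ * ‖x‖) :=
            mul_le_mul_of_nonneg_left h2 (pow_nonneg hA0.le n)
        _ = ((((r:ℝ)+1) * (1 - t))⁻¹) ^ (n+1) * ‖x‖ := by ring

set_option maxHeartbeats 1000000 in
lemma cesaro_step (hp : p ≠ ⊤) (ht : t ∈ Set.Ico (0:ℝ) 1)
    (hC : ∀ (x : lp (fun _ : ℕ => ℂ) p) (n : ℕ),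
      (C x : ℕ → ℂ) n =
        (1 / ((n : ℂ) + 1)) * ∑ i ∈ Finset.range (n + 1), (t : ℂ) ^ (n - i) * (x : ℕ → ℂ) i)
    (j : ℕ) (hj : 1 ≤ j)
    (M ρ : ℝ) (hM0 : 0 ≤ M) (hρ0 : 0 ≤ ρ) (hρ1 : ρ < 1)
    (hbound : ∀ x : lp (fun _ : ℕ => ℂ) p, (∀ m, m < j+1 → (x : ℕ → ℂ) m = 0) →
      ∀ n, ‖(C^n) x‖ ≤ M * ρ^n * ‖x‖) :
    ∃ M' ρ' : ℝ, 0 ≤ M' ∧ 0 ≤ ρ' ∧ ρ' < 1 ∧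
      ∀ x : lp (fun _ : ℕ => ℂ) p, (∀ m, m < j → (x : ℕ → ℂ) m = 0) →
        ∀ n, ‖(C^n) x‖ ≤ M' * ρ'^n * ‖x‖ := by
  have hq0 : (0:ℝ) < p.toReal := by linarith [one_le_q hp]
  set e : lp (fun _ : ℕ => ℂ) p := lp.single p j (1:ℂ) with hedef
  have he : ∀ m, (e : ℕ → ℂ) m = if m = j then 1 else 0 := by
    intro m
    by_cases hm : m = j
    · subst hm
      simp [hedef, lp.single_apply_self]
    · simp [hedef, lp.single_apply_ne p j _ hm, hm]
  have hnorme : ‖e‖ = 1 := by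
    rw [hedef]
    exact (lp.norm_single (E := fun _ : ℕ => ℂ) (pos_iff_ne_zero.mpr p_ne_zero') j (1:ℂ)).trans (by simp)
  set c : ℂ := 1/((j:ℂ)+1) with hcdef
  have hcnorm : ‖c‖ = ((j:ℝ)+1)⁻¹ := norm_inv_nat_succ j
  have hchalf : ‖c‖ ≤ 1/2 := by
    rw [hcnorm, show (1:ℝ)/2 = (2:ℝ)⁻¹ by norm_num]
    refine inv_anti₀ (by norm_num) ?_
    exact_mod_cast (by omega : 2 ≤ j + 1)
  have heV : ∀ m, m < j → (e : ℕ → ℂ) m = 0 := by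
    intro m hm
    rw [he, if_neg (by omega)]
  have hCej : (C e : ℕ → ℂ) j = c := by
    rw [hC]
    rw [Finset.sum_eq_single j]
    · rw [he, if_pos rfl, Nat.sub_self, pow_zero, one_mul, mul_one, hcdef]
    · intro i hi hij
      rw [he, if_neg hij, mul_zero]
    · intro h
      exact absurd (Finset.mem_range.mpr (by omega)) h
  set w : lp (fun _ : ℕ => ℂ) p := C e - c • e with hwdef
  have hwV : ∀ m, m < j+1 → (w : ℕ → ℂ) m = 0 := by
    intro m hm
    have hcoe : (w : ℕ → ℂ) m = (C e : ℕ → ℂ) m - c * (e : ℕ → ℂ) m := by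
      rw [hwdef]
      simp [lp.coeFn_sub, lp.coeFn_smul, Pi.sub_apply, Pi.smul_apply, smul_eq_mul]
      rfl
    rw [hcoe]
    rcases Nat.lt_or_ge m j with h | h
    · rw [cesaro_vanish hC e heV h, he, if_neg (by omega), mul_zero, sub_zero]
    · have hmj : m = j := by omega
      subst hmj
      rw [hCej, he, if_pos rfl, mul_one, sub_self]
  have hCeq : C e = c • e + w := by rw [hwdef]; abel
  have hexp : ∀ n, (C^n) e = c^n • e + ∑ k ∈ Finset.range n, c^k • ((C^(n-1-k)) w) := by
    intro n
    induction n with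
    | zero => simp
    | succ n ih =>
      rw [pow_succ', ContinuousLinearMap.mul_apply, ih, map_add, map_smul, hCeq, map_sum]
      have hterm : ∀ k ∈ Finset.range n, C (c^k • ((C^(n-1-k)) w)) = c^k • ((C^(n-k)) w) := by
        intro k hk
        rw [Finset.mem_range] at hk
        have hnk : n - 1 - k + 1 = n - k := by omega
        rw [map_smul, ← ContinuousLinearMap.mul_apply, ← pow_succ', hnk]
      rw [Finset.sum_congr rfl hterm, Finset.sum_range_succ]
      simp only [Nat.add_sub_cancel, Nat.sub_self, pow_zero, ContinuousLinearMap.one_apply]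
      rw [smul_add, pow_succ, smul_smul]
      abel
  have hwn : ∀ m, ‖(C^m) w‖ ≤ M * ρ^m * ‖w‖ := fun m => hbound w hwV m
  set σ : ℝ := max ρ (1/2) with hσdef
  have hσ0 : (0:ℝ) < σ := lt_of_lt_of_le (by norm_num) (le_max_right _ _)
  have hσ1 : σ < 1 := max_lt hρ1 (by norm_num)
  have hcσ : ‖c‖ ≤ σ := hchalf.trans (le_max_right _ _)
  have hρσ : ρ ≤ σ := le_max_left _ _
  have hCe_bound : ∀ n : ℕ, ‖(C^n) e‖ ≤ σ^n + 2*M*‖w‖ * ((n:ℝ) * σ^n) := by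
    intro n
    rw [hexp n]
    refine (norm_add_le _ _).trans ?_
    have h1 : ‖c^n • e‖ ≤ σ^n := by
      rw [norm_smul, norm_pow, hnorme, mul_one]
      exact pow_le_pow_left₀ (norm_nonneg c) hcσ n
    have h2 : ‖∑ k ∈ Finset.range n, c^k • ((C^(n-1-k)) w)‖ ≤ (n:ℝ) * (σ^(n-1) * (M * ‖w‖)) := by
      refine (norm_sum_le _ _).trans ?_
      have hterm : ∀ k ∈ Finset.range n, ‖c^k • ((C^(n-1-k)) w)‖ ≤ σ^(n-1) * (M * ‖w‖) := by
        intro k hk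
        rw [Finset.mem_range] at hk
        rw [norm_smul, norm_pow]
        calc ‖c‖^k * ‖(C^(n-1-k)) w‖ ≤ ‖c‖^k * (M * ρ^(n-1-k) * ‖w‖) :=
              mul_le_mul_of_nonneg_left (hwn (n-1-k)) (pow_nonneg (norm_nonneg c) k)
          _ ≤ σ^k * (M * σ^(n-1-k) * ‖w‖) := by
              refine mul_le_mul (pow_le_pow_left₀ (norm_nonneg c) hcσ k) ?_ (by positivity) (pow_nonneg (hσ0.le.trans ?_) k)
              · refine mul_le_mul_of_nonneg_right ?_ (norm_nonneg w)
                exact mul_le_mul_of_nonneg_left (pow_le_pow_left₀ hρ0 hρσ _) hM0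
              · exact le_refl σ
          _ = σ^(k + (n-1-k)) * (M * ‖w‖) := by rw [pow_add]; ring
          _ = σ^(n-1) * (M * ‖w‖) := by congr 2; omega
      refine (Finset.sum_le_sum hterm).trans ?_
      rw [Finset.sum_const, Finset.card_range, nsmul_eq_mul]
    have h3 : (n:ℝ) * (σ^(n-1) * (M * ‖w‖)) ≤ 2*M*‖w‖ * ((n:ℝ) * σ^n) := by
      rcases Nat.eq_zero_or_pos n with h | h
      · subst h; simp
      · have hσn : σ^(n-1) ≤ 2 * σ^n := by
          have : σ^n = σ^(n-1) * σ := by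
            rw [← pow_succ]
            congr 1
            omega
          rw [this]
          have h12 : (1:ℝ)/2 ≤ σ := le_max_right _ _
          nlinarith [pow_nonneg hσ0.le (n-1)]
        calc (n:ℝ) * (σ^(n-1) * (M * ‖w‖)) ≤ (n:ℝ) * ((2 * σ^n) * (M * ‖w‖)) := by
              refine mul_le_mul_of_nonneg_left ?_ (Nat.cast_nonneg n)
              exact mul_le_mul_of_nonneg_right hσn (by positivity)
          _ = 2*M*‖w‖ * ((n:ℝ) * σ^n) := by ring
    calc ‖c^n • e‖ + ‖∑ k ∈ Finset.range n, c^k • ((C^(n-1-k)) w)‖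
        ≤ σ^n + (n:ℝ) * (σ^(n-1) * (M * ‖w‖)) := add_le_add h1 h2
      _ ≤ σ^n + 2*M*‖w‖ * ((n:ℝ) * σ^n) := by linarith [h3]
  obtain ⟨M', ρ', hM'0, hρ'0, hρ'1, hdom⟩ :=
    geom_dom σ (1 + 2*M) (2*M*‖w‖) hσ0 hσ1 (by linarith) (by positivity)
  refine ⟨M', ρ', hM'0, hρ'0, hρ'1, ?_⟩
  intro x hx n
  set a : ℂ := (x : ℕ → ℂ) j with hadef
  set y : lp (fun _ : ℕ => ℂ) p := x - a • e with hydef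
  have hyV : ∀ m, m < j+1 → (y : ℕ → ℂ) m = 0 := by
    intro m hm
    have hcoe : (y : ℕ → ℂ) m = (x : ℕ → ℂ) m - a * (e : ℕ → ℂ) m := by
      rw [hydef]
      simp [lp.coeFn_sub, lp.coeFn_smul, Pi.sub_apply, Pi.smul_apply, smul_eq_mul]
      rfl
    rw [hcoe]
    rcases Nat.lt_or_ge m j with h | h
    · rw [hx m h, he, if_neg (by omega), mul_zero, sub_zero]
    · have hmj : m = j := by omega
      subst hmj
      rw [he, if_pos rfl, mul_one, hadef, sub_self]
  have hxeq : x = a • e + y := by rw [hydef]; abel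
  have heq : (C^n) x = a • ((C^n) e) + (C^n) y := by
    conv_lhs => rw [hxeq]
    rw [map_add, map_smul]
  have hax : ‖a‖ ≤ ‖x‖ := lp.norm_apply_le_norm p_ne_zero' x j
  have hy2 : ‖y‖ ≤ 2 * ‖x‖ := by
    rw [hydef]
    refine (norm_sub_le _ _).trans ?_
    rw [norm_smul, hnorme, mul_one]
    linarith
  have hρσn : ρ^n ≤ σ^n := pow_le_pow_left₀ hρ0 hρσ n
  have hCny : ‖(C^n) y‖ ≤ M * σ^n * (2 * ‖x‖) := by
    refine (hbound y hyV n).trans ?_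
    refine mul_le_mul (mul_le_mul_of_nonneg_left hρσn hM0) hy2 (norm_nonneg y) (by positivity)
  calc ‖(C^n) x‖ = ‖a • ((C^n) e) + (C^n) y‖ := by rw [heq]
    _ ≤ ‖a‖ * ‖(C^n) e‖ + ‖(C^n) y‖ := by
        refine (norm_add_le _ _).trans ?_
        rw [norm_smul]
    _ ≤ ‖x‖ * (σ^n + 2*M*‖w‖ * ((n:ℝ) * σ^n)) + M * σ^n * (2 * ‖x‖) := by
        refine add_le_add ?_ hCny
        refine mul_le_mul hax (hCe_bound n) (norm_nonneg _) (norm_nonneg x)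
    _ = ((1 + 2*M) * σ^n + 2*M*‖w‖ * ((n:ℝ) * σ^n)) * ‖x‖ := by ring
    _ ≤ (M' * ρ'^n) * ‖x‖ :=
        mul_le_mul_of_nonneg_right (hdom n) (norm_nonneg x)
    _ = M' * ρ'^n * ‖x‖ := by ring

lemma cesaro_main_decay (hp : p ≠ ⊤) (ht : t ∈ Set.Ico (0:ℝ) 1)
    (hC : ∀ (x : lp (fun _ : ℕ => ℂ) p) (n : ℕ),
      (C x : ℕ → ℂ) n =
        (1 / ((n : ℂ) + 1)) * ∑ i ∈ Finset.range (n + 1), (t : ℂ) ^ (n - i) * (x : ℕ → ℂ) i) :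
    ∃ M ρ : ℝ, 0 ≤ M ∧ 0 ≤ ρ ∧ ρ < 1 ∧
      ∀ x : lp (fun _ : ℕ => ℂ) p, (x : ℕ → ℂ) 0 = 0 →
        ∀ n, ‖(C^n) x‖ ≤ M * ρ^n * ‖x‖ := by
  obtain ⟨ht0, ht1⟩ := ht
  have h1t : (0:ℝ) < 1 - t := by linarith
  set S : ℕ → Prop := fun j => ∃ M ρ : ℝ, 0 ≤ M ∧ 0 ≤ ρ ∧ ρ < 1 ∧
    ∀ x : lp (fun _ : ℕ => ℂ) p, (∀ m, m < j → (x : ℕ → ℂ) m = 0) →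
      ∀ n, ‖(C^n) x‖ ≤ M * ρ^n * ‖x‖ with hS
  have Smono : ∀ j j', j ≤ j' → S j → S j' := by
    rintro j j' hjj ⟨M, ρ, h1, h2, h3, h4⟩
    exact ⟨M, ρ, h1, h2, h3, fun x hx n => h4 x (fun m hm => hx m (by omega)) n⟩
  set r : ℕ := Nat.ceil ((1-t)⁻¹) with hrdef
  have hrA : (((r:ℝ)+1) * (1 - t))⁻¹ < 1 := by
    have hle : (1-t)⁻¹ ≤ (r:ℝ) := Nat.le_ceil _
    rw [inv_lt_one_iff₀]
    right
    have h2 : ((1-t)⁻¹ + 1) * (1 - t) = 1 + (1-t) := by field_simp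
    nlinarith
  have hA0 : (0:ℝ) < (((r:ℝ)+1) * (1 - t))⁻¹ := by positivity
  have hbase : S r := by
    refine ⟨1, (((r:ℝ)+1) * (1 - t))⁻¹, zero_le_one, hA0.le, hrA, fun x hx n => ?_⟩
    rw [one_mul]
    exact (powers_on_Vr hp ⟨ht0, ht1⟩ hC r n x hx).2
  have hstep : ∀ j, 1 ≤ j → S (j+1) → S j := by
    rintro j hj ⟨M, ρ, hM0, hρ0, hρ1, hbound⟩
    exact cesaro_step hp ⟨ht0, ht1⟩ hC j hj M ρ hM0 hρ0 hρ1 hbound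
  have hdown : ∀ d, S (max (r - d) 1) := by
    intro d
    induction d with
    | zero => exact Smono r (max r 1) (le_max_left _ _) hbase
    | succ d ihd =>
      by_cases h : 1 ≤ r - (d+1)
      · rw [max_eq_left h]
        refine hstep _ h ?_
        have heq : (r - (d+1)) + 1 = max (r - d) 1 := by
          rw [max_eq_left (by omega : 1 ≤ r - d)]
          omega
        rw [heq]
        exact ihd
      · rw [max_eq_right (by omega : r - (d+1) ≤ 1)]
        rw [max_eq_right (by omega : r - d ≤ 1)] at ihd
        exact ihd
  have hS1 : S 1 := by
    have h := hdown (r - 1)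
    rwa [max_eq_right (by omega : r - (r-1) ≤ 1)] at h
  obtain ⟨M, ρ, h1, h2, h3, h4⟩ := hS1
  exact ⟨M, ρ, h1, h2, h3, fun x hx n =>
    h4 x (fun m hm => by rwa [show m = 0 by omega]) n⟩

end Op


/-- Let `1 ≤ p < ∞` and `t ∈ [0,1)`, and let `C` be the generalized Cesàro operator
`C_t` on `ℓ^p` and `P` the rank-one operator `P x = x₀ · (t^k)_k` (both given by
their coordinate formulas). Then `Cⁿ → P` in operator norm; in particular `C_t` is
power bounded and uniformly mean ergodic, with Cesàro means `(1/n) ∑_{m=1}^n Cᵐ`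
converging in operator norm to `P`. -/
theorem genCesaro_powers_tendsto_lp (p : ℝ≥0∞) [Fact (1 ≤ p)] (hp : p ≠ ⊤)
    (t : ℝ) (ht : t ∈ Set.Ico (0 : ℝ) 1)
    (C P : lp (fun _ : ℕ => ℂ) p →L[ℂ] lp (fun _ : ℕ => ℂ) p)
    (hC : ∀ (x : lp (fun _ : ℕ => ℂ) p) (n : ℕ),
      (C x : ℕ → ℂ) n =
        (1 / ((n : ℂ) + 1)) * ∑ i ∈ Finset.range (n + 1), (t : ℂ) ^ (n - i) * (x : ℕ → ℂ) i)
    (hP : ∀ (x : lp (fun _ : ℕ => ℂ) p) (k : ℕ),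
      (P x : ℕ → ℂ) k = (x : ℕ → ℂ) 0 * (t : ℂ) ^ k) :
    Filter.Tendsto (fun n : ℕ => C ^ n) Filter.atTop (nhds P) ∧
    (∃ M : ℝ, ∀ n : ℕ, ‖C ^ n‖ ≤ M) ∧
    Filter.Tendsto (fun n : ℕ => ((n : ℂ))⁻¹ • ∑ m ∈ Finset.Icc 1 n, C ^ m)
      Filter.atTop (nhds P) := by
  obtain ⟨M, ρ, hM0, hρ0, hρ1, hdec⟩ := cesaro_main_decay hp ht hC
  -- C fixes the range of P
  have hCP : ∀ x, C (P x) = P x := by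
    intro x
    apply lp.ext
    funext n
    rw [hC (P x) n]
    have hterm : ∀ i ∈ Finset.range (n+1),
        (t:ℂ)^(n-i) * (P x : ℕ → ℂ) i = (x : ℕ → ℂ) 0 * (t:ℂ)^n := by
      intro i hi
      rw [Finset.mem_range] at hi
      rw [hP]
      rw [show (t:ℂ)^(n-i) * ((x : ℕ → ℂ) 0 * (t:ℂ)^i)
          = (x : ℕ → ℂ) 0 * ((t:ℂ)^(n-i) * (t:ℂ)^i) from by ring, ← pow_add]
      congr 2
      omega
    rw [Finset.sum_congr rfl hterm, Finset.sum_const, Finset.card_range, hP x n]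
    rw [nsmul_eq_mul]
    have hne : ((n:ℂ)+1) ≠ 0 := Nat.cast_add_one_ne_zero n
    push_cast
    field_simp
  have hCnP : ∀ (n : ℕ) x, (C^n) (P x) = P x := by
    intro n x
    induction n with
    | zero => simp
    | succ n ih => rw [pow_succ, ContinuousLinearMap.mul_apply, hCP x, ih]
  have hPx0 : ∀ x : lp (fun _ : ℕ => ℂ) p, ((x - P x : lp (fun _ : ℕ => ℂ) p) : ℕ → ℂ) 0 = 0 := by
    intro x
    have : ((x - P x : lp (fun _ : ℕ => ℂ) p) : ℕ → ℂ) 0 = (x : ℕ → ℂ) 0 - (P x : ℕ → ℂ) 0 := by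
      simp [lp.coeFn_sub, Pi.sub_apply]
    rw [this, hP, pow_zero, mul_one, sub_self]
  have key : ∀ n : ℕ, ‖C^n - P‖ ≤ (M * (1 + ‖P‖)) * ρ^n := by
    intro n
    refine ContinuousLinearMap.opNorm_le_bound _ (by positivity) (fun x => ?_)
    have h1 : (C^n - P) x = (C^n) (x - P x) := by
      rw [map_sub, hCnP n x, ContinuousLinearMap.sub_apply]
    rw [h1]
    refine (hdec _ (hPx0 x) n).trans ?_
    have h2 : ‖x - P x‖ ≤ (1 + ‖P‖) * ‖x‖ := by
      refine (norm_sub_le _ _).trans ?_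
      have h3 := P.le_opNorm x
      nlinarith [norm_nonneg x]
    calc M * ρ^n * ‖x - P x‖ ≤ M * ρ^n * ((1 + ‖P‖) * ‖x‖) :=
          mul_le_mul_of_nonneg_left h2 (by positivity)
      _ = (M * (1 + ‖P‖)) * ρ^n * ‖x‖ := by ring
  have hK0 : (0:ℝ) ≤ M * (1 + ‖P‖) := by positivity
  have htend0 : Filter.Tendsto (fun n : ℕ => ‖C^n - P‖) Filter.atTop (nhds 0) := by
    refine squeeze_zero (fun n => norm_nonneg _) key ?_
    have := (tendsto_pow_atTop_nhds_zero_of_lt_one hρ0 hρ1).const_mul (M * (1 + ‖P‖))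
    simpa using this
  have hmain : Filter.Tendsto (fun n : ℕ => C ^ n) Filter.atTop (nhds P) :=
    tendsto_iff_norm_sub_tendsto_zero.mpr htend0
  refine ⟨hmain, ⟨M * (1 + ‖P‖) + ‖P‖, fun n => ?_⟩, ?_⟩
  · have hρn : ρ^n ≤ 1 := pow_le_one₀ hρ0 hρ1.le
    calc ‖C^n‖ = ‖(C^n - P) + P‖ := by rw [sub_add_cancel]
      _ ≤ ‖C^n - P‖ + ‖P‖ := norm_add_le _ _
      _ ≤ (M * (1 + ‖P‖)) * ρ^n + ‖P‖ := by linarith [key n]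
      _ ≤ M * (1 + ‖P‖) + ‖P‖ := by nlinarith
  · rw [tendsto_iff_norm_sub_tendsto_zero]
    refine squeeze_zero' (g := fun n : ℕ => ((M * (1 + ‖P‖)) * (1-ρ)⁻¹) * ((n:ℝ))⁻¹)
      (Filter.Eventually.of_forall (fun n => norm_nonneg _)) ?_ ?_
    · filter_upwards [Filter.eventually_ge_atTop 1] with n hn
      have hn0 : (n:ℂ) ≠ 0 := Nat.cast_ne_zero.mpr (by omega)
      have hsplit : (n:ℂ)⁻¹ • (∑ m ∈ Finset.Icc 1 n, C^m) - P
          = (n:ℂ)⁻¹ • (∑ m ∈ Finset.Icc 1 n, (C^m - P)) := by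
        rw [Finset.sum_sub_distrib, smul_sub]
        congr 1
        rw [Finset.sum_const, Nat.card_Icc]
        rw [show n + 1 - 1 = n from rfl]
        rw [← Nat.cast_smul_eq_nsmul ℂ, smul_smul, inv_mul_cancel₀ hn0, one_smul]
      rw [hsplit, norm_smul ((n:ℂ)⁻¹) (∑ m ∈ Finset.Icc 1 n, (C^m - P)), norm_inv,
        Complex.norm_natCast]
      calc ((n:ℝ))⁻¹ * ‖∑ m ∈ Finset.Icc 1 n, (C^m - P)‖
          ≤ ((n:ℝ))⁻¹ * ∑ m ∈ Finset.Icc 1 n, (M * (1 + ‖P‖)) * ρ^m := by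
            refine mul_le_mul_of_nonneg_left ?_ (by positivity)
            exact (norm_sum_le _ _).trans (Finset.sum_le_sum (fun m _ => key m))
        _ ≤ ((n:ℝ))⁻¹ * ((M * (1 + ‖P‖)) * (1-ρ)⁻¹) := by
            refine mul_le_mul_of_nonneg_left ?_ (by positivity)
            rw [← Finset.mul_sum]
            refine mul_le_mul_of_nonneg_left ?_ hK0
            exact sum_geom_le hρ0 hρ1 _ _ (fun a _ b _ hab => hab)
        _ = ((M * (1 + ‖P‖)) * (1-ρ)⁻¹) * ((n:ℝ))⁻¹ := by ring
    · have := tendsto_inv_atTop_nhds_zero_nat.const_mul ((M * (1 + ‖P‖)) * (1-ρ)⁻¹)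
      simpa using this
end

section
/- Let 1 ≤ p < ∞ and t ∈ [0,1), and regard C_t as a bounded linear operator on ℓ^p. Then C_t is not supercyclic: there is no x ∈ ℓ^p such that the projective orbit {λ · C_t^n x : λ ∈ ℂ, n ∈ ℕ₀} is dense in ℓ^p. -/
/-!
The functionals `δ₀ : x ↦ x₀` and `ψ : x ↦ x₁ - t x₀` are eigenvectors of the adjoint of `C_t`,
with eigenvalues `1` and `1/2`. Along a projective orbit `c • Cⁿ x` they therefore scale as
`c` and `c 2⁻ⁿ`, so the whole orbit lies in the closed set `|ψ y| |x₀| ≤ |y₀| |ψ x|` (or in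
`ker δ₀` if `x₀ = 0`), which misses `e₁`.
-/

open scoped ENNReal

def projectiveOrbit {R M : Type*} [Semiring R] [AddCommMonoid M] [Module R M]
    [TopologicalSpace M] (T : M →L[R] M) (x : M) : Set M :=
  {y | ∃ (c : R) (n : ℕ), y = c • (T ^ n) x}

section ProjectiveOrbit

variable {𝕜 E : Type*} [NormedField 𝕜] [AddCommGroup E] [Module 𝕜 E] [TopologicalSpace E]
  {T : E →L[𝕜] E} {φ ψ : E →L[𝕜] 𝕜} {α β : 𝕜} {x y : E}

theorem apply_pow_apply_of_comp_eq_smul (hφ : φ.comp T = α • φ) (n : ℕ) (x : E) :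
    φ ((T ^ n) x) = α ^ n * φ x := by
  induction n with
  | zero => simp
  | succ n ih =>
    rw [pow_succ', mul_apply_eq_comp, ← φ.comp_apply, hφ, smul_apply, ih, smul_eq_mul,
      pow_succ']
    ring

theorem apply_eq_zero_of_mem_projectiveOrbit (hφ : φ.comp T = α • φ) (hx : φ x = 0)
    (hy : y ∈ projectiveOrbit T x) : φ y = 0 := by
  obtain ⟨c, n, rfl⟩ := hy
  rw [map_smul, apply_pow_apply_of_comp_eq_smul hφ, hx, mul_zero, smul_zero]

theorem norm_mul_le_of_mem_projectiveOrbit (hφ : φ.comp T = α • φ) (hψ : ψ.comp T = β • ψ)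
    (hβα : ‖β‖ ≤ ‖α‖) (hy : y ∈ projectiveOrbit T x) :
    ‖ψ y‖ * ‖φ x‖ ≤ ‖φ y‖ * ‖ψ x‖ := by
  obtain ⟨c, n, rfl⟩ := hy
  simp only [map_smul, smul_eq_mul, apply_pow_apply_of_comp_eq_smul hφ,
    apply_pow_apply_of_comp_eq_smul hψ, norm_mul, norm_pow]
  calc ‖c‖ * (‖β‖ ^ n * ‖ψ x‖) * ‖φ x‖ = ‖c‖ * ‖β‖ ^ n * (‖ψ x‖ * ‖φ x‖) := by ring
    _ ≤ ‖c‖ * ‖α‖ ^ n * (‖ψ x‖ * ‖φ x‖) := by gcongr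
    _ = ‖c‖ * (‖α‖ ^ n * ‖φ x‖) * ‖ψ x‖ := by ring

theorem not_dense_projectiveOrbit_of_comp_eq_smul (hφ : φ.comp T = α • φ)
    (hψ : ψ.comp T = β • ψ) (hβα : ‖β‖ ≤ ‖α‖) (hφ₀ : φ ≠ 0) {e : E} (hφe : φ e = 0)
    (hψe : ψ e ≠ 0) (x : E) : ¬ Dense (projectiveOrbit T x) := by
  intro hD
  have eq_univ : ∀ {S : Set E}, IsClosed S → projectiveOrbit T x ⊆ S → S = Set.univ :=
    fun hS hsub ↦ hS.closure_eq ▸ (hD.mono hsub).closure_eq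
  by_cases hx : φ x = 0
  · have hker : {y | φ y = 0} = Set.univ :=
      eq_univ (isClosed_eq φ.continuous continuous_const)
        fun y hy ↦ apply_eq_zero_of_mem_projectiveOrbit hφ hx hy
    exact hφ₀ (ContinuousLinearMap.ext (Set.eq_univ_iff_forall.1 hker))
  · have hcone : {y | ‖ψ y‖ * ‖φ x‖ ≤ ‖φ y‖ * ‖ψ x‖} = Set.univ :=
      eq_univ (isClosed_le (by fun_prop) (by fun_prop))
        fun y hy ↦ norm_mul_le_of_mem_projectiveOrbit hφ hψ hβα hy
    have he : ‖ψ e‖ * ‖φ x‖ ≤ ‖φ e‖ * ‖ψ x‖ := Set.eq_univ_iff_forall.1 hcone e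
    rw [hφe, norm_zero, zero_mul] at he
    exact (mul_pos (norm_pos_iff.2 hψe) (norm_pos_iff.2 hx)).not_ge he

end ProjectiveOrbit

section GenCesaro

variable {p : ℝ≥0∞} [Fact (1 ≤ p)]

def IsGenCesaroOperator (t : ℝ) (C : lp (fun _ : ℕ => ℂ) p →L[ℂ] lp (fun _ : ℕ => ℂ) p) :
    Prop :=
  ∀ (x : lp (fun _ : ℕ => ℂ) p) (n : ℕ), (C x : ℕ → ℂ) n =
    (1 / ((n : ℂ) + 1)) * ∑ i ∈ Finset.range (n + 1), (t : ℂ) ^ (n - i) * (x : ℕ → ℂ) i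

variable {t : ℝ} {C : lp (fun _ : ℕ => ℂ) p →L[ℂ] lp (fun _ : ℕ => ℂ) p}

theorem IsGenCesaroOperator.evalCLM_zero_comp (hC : IsGenCesaroOperator t C) :
    (lp.evalCLM ℂ (fun _ : ℕ => ℂ) p 0).comp C =
      (1 : ℂ) • lp.evalCLM ℂ (fun _ : ℕ => ℂ) p 0 := by
  ext x
  simp [lp.evalCLM, hC x 0]

theorem IsGenCesaroOperator.comp_evalCLM_one_sub (hC : IsGenCesaroOperator t C) :
    (lp.evalCLM ℂ (fun _ : ℕ => ℂ) p 1 - (t : ℂ) • lp.evalCLM ℂ (fun _ : ℕ => ℂ) p 0).comp C =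
      (1 / 2 : ℂ) •
        (lp.evalCLM ℂ (fun _ : ℕ => ℂ) p 1 - (t : ℂ) • lp.evalCLM ℂ (fun _ : ℕ => ℂ) p 0) := by
  ext x
  simp only [ContinuousLinearMap.comp_apply, sub_apply, smul_apply, lp.evalCLM,
    LinearMap.mkContinuous_apply, lp.evalₗ_apply, hC x 0, hC x 1, Finset.sum_range_succ,
    Finset.sum_range_zero]
  ring

end GenCesaro

theorem genCesaro_not_supercyclic_lp_general (p : ℝ≥0∞) [Fact (1 ≤ p)]
    (t : ℝ)
    (C : lp (fun _ : ℕ => ℂ) p →L[ℂ] lp (fun _ : ℕ => ℂ) p)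
    (hC : ∀ (x : lp (fun _ : ℕ => ℂ) p) (n : ℕ),
      (C x : ℕ → ℂ) n =
        (1 / ((n : ℂ) + 1)) * ∑ i ∈ Finset.range (n + 1), (t : ℂ) ^ (n - i) * (x : ℕ → ℂ) i) :
    ¬ ∃ x : lp (fun _ : ℕ => ℂ) p,
      Dense {y : lp (fun _ : ℕ => ℂ) p | ∃ (c : ℂ) (n : ℕ), y = c • (C ^ n) x} := by
  rintro ⟨x, hx⟩
  have h₀ : lp.evalCLM ℂ (fun _ : ℕ => ℂ) p 0 ≠ 0 := fun h ↦ by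
    simpa [lp.evalCLM] using congr($h (lp.single p 0 1))
  refine not_dense_projectiveOrbit_of_comp_eq_smul (IsGenCesaroOperator.evalCLM_zero_comp hC)
    (IsGenCesaroOperator.comp_evalCLM_one_sub hC) (by norm_num) h₀ (e := lp.single p 1 1)
    ?_ ?_ x hx <;> simp [lp.evalCLM, lp.single_apply]

/-- Let `1 ≤ p < ∞` and `t ∈ [0,1)`, and let `C` be the generalized Cesàro operator
`C_t` on `ℓ^p` (given by its coordinate formula). Then `C` is not supercyclic:
there is no `x ∈ ℓ^p` whose projective orbit `{λ · Cⁿ x : λ ∈ ℂ, n ∈ ℕ}` is dense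
in `ℓ^p`. -/
theorem genCesaro_not_supercyclic_lp (p : ℝ≥0∞) [Fact (1 ≤ p)] (hp : p ≠ ⊤)
    (t : ℝ) (ht : t ∈ Set.Ico (0 : ℝ) 1)
    (C : lp (fun _ : ℕ => ℂ) p →L[ℂ] lp (fun _ : ℕ => ℂ) p)
    (hC : ∀ (x : lp (fun _ : ℕ => ℂ) p) (n : ℕ),
      (C x : ℕ → ℂ) n =
        (1 / ((n : ℂ) + 1)) * ∑ i ∈ Finset.range (n + 1), (t : ℂ) ^ (n - i) * (x : ℕ → ℂ) i) :
    ¬ ∃ x : lp (fun _ : ℕ => ℂ) p,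
      Dense {y : lp (fun _ : ℕ => ℂ) p | ∃ (c : ℂ) (n : ℕ), y = c • (C ^ n) x} :=
  genCesaro_not_supercyclic_lp_general p t C hC
end

section
/- Let t ∈ [0,1). For every bounded complex sequence y, the series (Ty)_i := ∑_{k=i}^∞ (t^{k−i}/(k+1)) y_k converges absolutely for each i ∈ ℕ₀, the resulting sequence Ty is bounded with sup_i |(Ty)_i| ≤ (1/(1−t)) sup_k |y_k| (so T is a bounded operator on ℓ^∞ with ‖T‖ ≤ 1/(1−t)), and for every x ∈ ℓ¹ one has the duality identity ∑_{n=0}^∞ (C_t x)_n y_n = ∑_{n=0}^∞ x_n (Ty)_n; that is, T is the dual operator C'_t of C_t : ℓ¹ → ℓ¹. -/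
/-- The transposed generalized Cesàro operator:
`(C'_t y)_i = ∑_{k=i}^∞ (t^{k-i}/(k+1)) y_k`. -/
noncomputable def genCesaroDual (t : ℝ) (y : ℕ → ℂ) : ℕ → ℂ :=
  fun i => ∑' k : ℕ, if i ≤ k then ((t : ℂ) ^ (k - i) / ((k : ℂ) + 1)) * y k else 0

/-!
Write `C_t` as the lower-triangular matrix `K i k = t^(k-i)/(k+1)` (for `i ≤ k`), so that
`(C_t x)_k = ∑ᵢ K i k xᵢ` and `(C'_t y)_i = ∑ₖ K i k y_k`. Each row of `K` is dominated by the
shifted geometric sequence `t^(k-i)`, so the rows lie in `ℓ¹` with norm at most `1/(1-t)`.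
This gives the sup bound, and it makes the double series `∑ K i k xᵢ y_k` absolutely
convergent for `x ∈ ℓ¹`, `y ∈ ℓ^∞`, so the two orders of summation agree.
-/

section KernelPairing

variable {ι κ 𝕜 : Type*} [NormedField 𝕜]

theorem summable_norm_mul_of_bounded {K y : κ → 𝕜} {M : ℝ}
    (hK : Summable fun k => ‖K k‖) (hy : ∀ k, ‖y k‖ ≤ M) :
    Summable fun k => ‖K k * y k‖ :=
  (hK.mul_right M).of_nonneg_of_le (fun _ => norm_nonneg _)
    fun k => (norm_mul_le _ _).trans (mul_le_mul_of_nonneg_left (hy k) (norm_nonneg _))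

theorem norm_tsum_mul_le_of_bounded {K y : κ → 𝕜} {M : ℝ}
    (hK : Summable fun k => ‖K k‖) (hy : ∀ k, ‖y k‖ ≤ M) :
    ‖∑' k, K k * y k‖ ≤ (∑' k, ‖K k‖) * M := by
  have hKy := summable_norm_mul_of_bounded hK hy
  calc ‖∑' k, K k * y k‖ ≤ ∑' k, ‖K k * y k‖ := norm_tsum_le_tsum_norm hKy
    _ ≤ ∑' k, ‖K k‖ * M :=
      hKy.tsum_le_tsum (fun k => (norm_mul_le _ _).trans
        (mul_le_mul_of_nonneg_left (hy k) (norm_nonneg _))) (hK.mul_right M)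
    _ = (∑' k, ‖K k‖) * M := tsum_mul_right

theorem tsum_kernel_pairing_comm [CompleteSpace 𝕜] {K : ι → κ → 𝕜} {x : ι → 𝕜} {y : κ → 𝕜}
    {C M : ℝ} (hK : ∀ i, Summable fun k => ‖K i k‖) (hC : ∀ i, ∑' k, ‖K i k‖ ≤ C)
    (hx : Summable fun i => ‖x i‖) (hy : ∀ k, ‖y k‖ ≤ M) :
    ∑' k, (∑' i, K i k * x i) * y k = ∑' i, x i * ∑' k, K i k * y k := by
  obtain ⟨M', hM', hy'⟩ : ∃ M' : ℝ, 0 ≤ M' ∧ ∀ k, ‖y k‖ ≤ M' :=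
    ⟨max M 0, le_max_right _ _, fun k => (hy k).trans (le_max_left _ _)⟩
  have hG : Summable fun p : ι × κ => ‖K p.1 p.2‖ * ‖x p.1‖ * M' := by
    have hG0 : 0 ≤ fun p : ι × κ => ‖K p.1 p.2‖ * ‖x p.1‖ * M' := fun p =>
      mul_nonneg (mul_nonneg (norm_nonneg _) (norm_nonneg _)) hM'
    refine (summable_prod_of_nonneg hG0).2 ⟨fun i => ?_, ?_⟩
    · exact ((hK i).mul_right ‖x i‖).mul_right M'
    refine ((hx.mul_left C).mul_right M').of_nonneg_of_le
      (fun _ => tsum_nonneg fun _ => mul_nonneg (mul_nonneg (norm_nonneg _) (norm_nonneg _)) hM')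
      fun i => ?_
    dsimp only
    rw [tsum_mul_right, tsum_mul_right]
    exact mul_le_mul_of_nonneg_right (mul_le_mul_of_nonneg_right (hC i) (norm_nonneg _)) hM'
  have hF : Summable (Function.uncurry fun i k => K i k * x i * y k) := by
    refine Summable.of_norm (hG.of_nonneg_of_le (fun _ => norm_nonneg _) fun p => ?_)
    calc ‖K p.1 p.2 * x p.1 * y p.2‖ ≤ ‖K p.1 p.2‖ * ‖x p.1‖ * ‖y p.2‖ := norm_mul₃_le
      _ ≤ ‖K p.1 p.2‖ * ‖x p.1‖ * M' := by gcongr; exact hy' _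
  calc ∑' k, (∑' i, K i k * x i) * y k = ∑' k, ∑' i, K i k * x i * y k := by
        simp_rw [tsum_mul_right]
    _ = ∑' i, ∑' k, K i k * x i * y k := hF.tsum_comm
    _ = ∑' i, x i * ∑' k, K i k * y k := by
        simp_rw [← tsum_mul_left]
        congr 1; funext i; congr 1; funext k; ring

end KernelPairing

noncomputable def genCesaroKernel (t : ℝ) (i k : ℕ) : ℂ :=
  if i ≤ k then (t : ℂ) ^ (k - i) / ((k : ℂ) + 1) else 0

theorem hasSum_geometric_shift {t : ℝ} (h₀ : 0 ≤ t) (h₁ : t < 1) (i : ℕ) :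
    HasSum (fun k => if i ≤ k then t ^ (k - i) else 0) (1 - t)⁻¹ := by
  rw [← hasSum_nat_add_iff' i]
  have hlow : ∑ k ∈ Finset.range i, (if i ≤ k then t ^ (k - i) else 0) = 0 :=
    Finset.sum_eq_zero fun k hk => if_neg (by simpa using hk)
  simpa [hlow] using hasSum_geometric_of_lt_one h₀ h₁

theorem norm_genCesaroKernel_le {t : ℝ} (h₀ : 0 ≤ t) (i k : ℕ) :
    ‖genCesaroKernel t i k‖ ≤ if i ≤ k then t ^ (k - i) else 0 := by
  unfold genCesaroKernel
  split_ifs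
  · rw [norm_div, norm_pow, Complex.norm_real, Real.norm_of_nonneg h₀]
    refine div_le_self (by positivity) ?_
    rw [← Nat.cast_succ, Complex.norm_natCast]
    exact Nat.one_le_cast.mpr k.succ_pos
  · simp

theorem summable_norm_genCesaroKernel {t : ℝ} (h₀ : 0 ≤ t) (h₁ : t < 1) (i : ℕ) :
    Summable fun k => ‖genCesaroKernel t i k‖ :=
  (hasSum_geometric_shift h₀ h₁ i).summable.of_nonneg_of_le (fun _ => norm_nonneg _)
    (norm_genCesaroKernel_le h₀ i)

theorem tsum_norm_genCesaroKernel_le {t : ℝ} (h₀ : 0 ≤ t) (h₁ : t < 1) (i : ℕ) :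
    ∑' k, ‖genCesaroKernel t i k‖ ≤ (1 - t)⁻¹ :=
  hasSum_le (norm_genCesaroKernel_le h₀ i) (summable_norm_genCesaroKernel h₀ h₁ i).hasSum
    (hasSum_geometric_shift h₀ h₁ i)

theorem genCesaroKernel_mul (t : ℝ) (i k : ℕ) (z : ℂ) :
    genCesaroKernel t i k * z = if i ≤ k then ((t : ℂ) ^ (k - i) / ((k : ℂ) + 1)) * z else 0 := by
  rw [genCesaroKernel, ite_mul, zero_mul]

theorem genCesaroDual_eq_tsum (t : ℝ) (y : ℕ → ℂ) (i : ℕ) :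
    genCesaroDual t y i = ∑' k, genCesaroKernel t i k * y k := by
  simp only [genCesaroDual, genCesaroKernel_mul]

theorem genCesaro_eq_tsum (t : ℝ) (x : ℕ → ℂ) (k : ℕ) :
    genCesaro t x k = ∑' i, genCesaroKernel t i k * x i := by
  rw [tsum_eq_sum (s := Finset.range (k + 1)), genCesaro, Finset.mul_sum]
  · refine Finset.sum_congr rfl fun i hi => ?_
    rw [genCesaroKernel, if_pos (Nat.lt_succ_iff.mp (Finset.mem_range.mp hi))]
    ring
  · intro i hi
    rw [genCesaroKernel, if_neg (by simpa [Nat.lt_succ_iff] using hi), zero_mul]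

/-- Let `t ∈ [0,1)`. For every bounded complex sequence `y`, the series defining
`(C'_t y)_i = ∑_{k=i}^∞ (t^{k-i}/(k+1)) y_k` converges absolutely for each `i`; the
sequence `C'_t y` is bounded with `sup_i |(C'_t y)_i| ≤ (1/(1-t)) sup_k |y_k|`; and
for every `x ∈ ℓ¹` the duality identity `∑_n (C_t x)_n y_n = ∑_n x_n (C'_t y)_n`
holds, i.e. `C'_t` is the dual operator of `C_t : ℓ¹ → ℓ¹`. -/
theorem genCesaroDual_bounded_and_duality (t : ℝ) (ht : t ∈ Set.Ico (0 : ℝ) 1)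
    (y : ℕ → ℂ) (hy : ∃ M : ℝ, ∀ k, ‖y k‖ ≤ M) :
    (∀ i : ℕ, Summable (fun k : ℕ =>
      if i ≤ k then ‖((t : ℂ) ^ (k - i) / ((k : ℂ) + 1)) * y k‖ else 0)) ∧
    ((⨆ i : ℕ, ‖genCesaroDual t y i‖) ≤
      (1 / (1 - t)) * (⨆ k : ℕ, ‖y k‖)) ∧
    (∀ x : ℕ → ℂ, Summable (fun n => ‖x n‖) →
      ∑' n : ℕ, genCesaro t x n * y n = ∑' n : ℕ, x n * genCesaroDual t y n) := by
  obtain ⟨h₀, h₁⟩ := ht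
  obtain ⟨M, hM⟩ := hy
  have hK := summable_norm_genCesaroKernel h₀ h₁
  have hy_sup : ∀ k, ‖y k‖ ≤ ⨆ k, ‖y k‖ :=
    le_ciSup ⟨M, Set.forall_mem_range.mpr hM⟩
  refine ⟨fun i => ?_, ciSup_le fun i => ?_, fun x hx => ?_⟩
  · simpa only [genCesaroKernel_mul, apply_ite norm, norm_zero]
      using summable_norm_mul_of_bounded (hK i) hM
  · rw [genCesaroDual_eq_tsum, one_div]
    exact (norm_tsum_mul_le_of_bounded (hK i) hy_sup).trans <|
      mul_le_mul_of_nonneg_right (tsum_norm_genCesaroKernel_le h₀ h₁ i)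
        ((norm_nonneg _).trans (hy_sup 0))
  · simp only [genCesaro_eq_tsum, genCesaroDual_eq_tsum]
    exact tsum_kernel_pairing_comm hK (tsum_norm_genCesaroKernel_le h₀ h₁) hx hM
end
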